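/- arXiv:1501.07440 — 8 statements merged into one kernel-verified Lean document; each statement's English description precedes it below -/
import Mathlib

section
/- (Theorem 2, finite-alphabet form.) Fix δ₁ > 0 and, for each b ∈ ℬ^k, a partition of s = {1,…,k} into a nonempty set sdif(b) and its complement seq(b) in s. Then for every decoder d, the error probability satisfies pe ≥ P[ ι^n(X_{sdif(β_s)}; Y | X_{seq(β_s)}, β_s) ≤ log C(p−k+ℓ, ℓ) + log δ₁ ] − δ₁, where ℓ := |sdif(β_s)|, C(·,·) denotes binomial coefficients, and the probability is under the joint law conditioned on S = s. -/
/-!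
Relabelling the columns of the measurement matrix by a permutation `π` of `{1,…,p}` and
conjugating the decoder accordingly does not change the error probability, because `P_X`, `P_β`
and `P_{Y|X_sβ_s}` are exchangeable; so it suffices to bound the error averaged over all `π`.
For a single decoder, on the event `ι^n ≤ log C(p-k+ℓ, ℓ) + log δ₁` the likelihood of the data is
at most `δ₁ C(p-k+ℓ, ℓ)` times their likelihood under `P_{Y|X_{seq}β_s}`, so the probability of the
event is at most the error probability plus `δ₁ C(p-k+ℓ, ℓ)` times the probability, under that law,
that the decoder outputs the true support `s`. Under it, the `C(p-k+ℓ, ℓ)` supports that share the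
`seq` columns of `s` are images of `s` by permutations preserving the law, so on average over `π`
each of them is output as often as `s`; being output on disjoint events, `s` is output with average
probability at most `1 / C(p-k+ℓ, ℓ)`.
-/

open Finset

attribute [local instance] Classical.propDecidable

namespace SupportRecoveryConv

variable {X B Y : Type*}

/-- `P_{Y|X_seq β_s}(y | x_seq, b)`: the conditional pmf of a single observation given only
the columns outside `sdif`, averaging the `sdif`-columns over the i.i.d. law `PX`. -/
noncomputable def margY [Fintype X] {k : ℕ} (PX : X → ℝ)
    (PY : Y → (Fin k → X) → (Fin k → B) → ℝ) (sdif : Finset (Fin k))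
    (y : Y) (x : Fin k → X) (b : Fin k → B) : ℝ :=
  ∑ x' : {i // i ∈ sdif} → X,
    (∏ i, PX (x' i)) * PY y (fun i => if h : i ∈ sdif then x' ⟨i, h⟩ else x i) b

/-- The `n`-measurement information density `ι^n(x_sdif; y | x_seq, b)`. -/
noncomputable def infoDens [Fintype X] {k n : ℕ} (PX : X → ℝ)
    (PY : Y → (Fin k → X) → (Fin k → B) → ℝ) (sdif : Finset (Fin k))
    (x : Fin n → Fin k → X) (y : Fin n → Y) (b : Fin k → B) : ℝ :=
  ∑ i, Real.log (PY (y i) (x i) b / margY PX PY sdif (y i) (x i) b)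

/-- The joint pmf of `(S, X, β_S, Y)`:  `S` uniform on `k`-subsets of `{1,…,p}`, i.i.d.
measurement matrix, `β_S ~ P_β`, and conditionally i.i.d. observations, where row `i` of the
matrix is restricted to the columns indexed by `S` (in increasing order). -/
noncomputable def joint (p k n : ℕ) (PX : X → ℝ) (Pβ : (Fin k → B) → ℝ)
    (PY : Y → (Fin k → X) → (Fin k → B) → ℝ)
    (ω : {s : Finset (Fin p) // s.card = k} ×
      (Fin n → Fin p → X) × (Fin k → B) × (Fin n → Y)) : ℝ :=
  ((p.choose k : ℝ))⁻¹ * (∏ i, ∏ j, PX (ω.2.1 i j)) * Pβ ω.2.2.1 *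
    ∏ i, PY (ω.2.2.2 i) (fun t => ω.2.1 i (ω.1.1.orderEmbOfFin ω.1.2 t)) ω.2.2.1

/-- The conditional pmf of `(X, β_s, Y)` given `S = s = {1,…,k}` (the first `k` columns). -/
noncomputable def cond {p k n : ℕ} (hkp : k ≤ p) (PX : X → ℝ) (Pβ : (Fin k → B) → ℝ)
    (PY : Y → (Fin k → X) → (Fin k → B) → ℝ)
    (ω : (Fin n → Fin p → X) × (Fin k → B) × (Fin n → Y)) : ℝ :=
  (∏ i, ∏ j, PX (ω.1 i j)) * Pβ ω.2.1 *
    ∏ i, PY (ω.2.2 i) (fun t => ω.1 i (Fin.castLE hkp t)) ω.2.1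

open scoped Pointwise

-- Permutations of the columns act on measurement matrices by `(σ • x) i j = x i (σ⁻¹ j)`.
attribute [local instance] arrowAction

abbrev Support (p k : ℕ) := {s : Finset (Fin p) // s.card = k}

instance {G α : Type*} [Group G] [MulAction G α] [DecidableEq α] (k : ℕ) :
    MulAction G {s : Finset α // s.card = k} :=
  inferInstanceAs (MulAction G (Set.powersetCard α k))

lemma exists_perm_fix_smul_eq {α : Type*} [Finite α] [DecidableEq α] {w s t : Finset α}
    (hws : w ⊆ s) (hwt : w ⊆ t) (hst : s.card = t.card) :
    ∃ σ : Equiv.Perm α, (∀ a ∈ w, σ a = a) ∧ σ • s = t := by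
  have hcard : ∀ u : Finset α, w ⊆ u → ((u \ w).subtype (· ∉ w)).card = u.card - w.card := by
    intro u hwu
    rw [card_subtype, filter_true_of_mem (fun a ha => (mem_sdiff.1 ha).2),
      card_sdiff_of_subset hwu]
  obtain ⟨τ, hτ⟩ := Equiv.Perm.exists_map_finset_eq _ _
    ((hcard s hws).trans ((congrArg (· - w.card) hst).trans (hcard t hwt).symm))
  refine ⟨Equiv.Perm.ofSubtype τ,
    fun a ha => Equiv.Perm.ofSubtype_apply_of_not_mem τ (not_not.2 ha),
    eq_of_subset_of_card_le (fun a ha => ?_) (by rw [card_smul_finset, hst])⟩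
  obtain ⟨b, hb, rfl⟩ := mem_smul_finset.1 ha
  by_cases hbw : b ∈ w
  · rw [Equiv.Perm.smul_def, Equiv.Perm.ofSubtype_apply_of_not_mem τ (not_not.2 hbw)]
    exact hwt hbw
  · have hmem : τ ⟨b, hbw⟩ ∈ (t \ w).subtype (· ∉ w) :=
      hτ ▸ mem_map_of_mem _ (mem_subtype.2 (mem_sdiff.2 ⟨hb, hbw⟩))
    rw [Equiv.Perm.smul_def, Equiv.Perm.ofSubtype_apply_of_mem τ hbw]
    exact (mem_sdiff.1 (mem_subtype.1 hmem)).1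

lemma card_filter_subset_eq_choose {α : Type*} [Fintype α] [DecidableEq α] {k : ℕ}
    (w : Finset α) (hw : w.card ≤ k) :
    (univ.filter fun s : {s : Finset α // s.card = k} => w ⊆ s.1).card
      = (Fintype.card α - w.card).choose (k - w.card) := by
  rw [← card_compl, ← card_powersetCard]
  refine card_bij' (fun s _ => s.1 \ w) (fun t ht => ⟨w ∪ t, ?_⟩)
    (fun s hs => ?_) (fun t ht => ?_) (fun s hs => ?_) (fun t ht => ?_)
  · obtain ⟨htw, htc⟩ := mem_powersetCard.1 ht
    rw [card_union_of_disjoint (disjoint_left.2 fun a ha hat => mem_compl.1 (htw hat) ha), htc]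
    omega
  · rw [mem_powersetCard, card_sdiff_of_subset (mem_filter.1 hs).2, s.2]
    exact ⟨fun a ha => mem_compl.2 (mem_sdiff.1 ha).2, rfl⟩
  · exact mem_filter.2 ⟨mem_univ _, subset_union_left⟩
  · exact Subtype.ext (union_sdiff_of_subset (mem_filter.1 hs).2)
  · exact union_sdiff_cancel_left
      (disjoint_right.2 fun a ha => mem_compl.1 ((mem_powersetCard.1 ht).1 ha))

lemma exists_perm_comp_eq_of_range_eq {ι α : Type*} {e e' : ι → α} (he : Function.Injective e)
    (he' : Function.Injective e') (h : Set.range e' = Set.range e) :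
    ∃ σ : Equiv.Perm ι, e ∘ σ = e' :=
  ⟨(Equiv.ofInjective e' he').trans ((Equiv.setCongr h).trans (Equiv.ofInjective e he).symm),
    funext fun i => by simp [Equiv.apply_ofInjective_symm]⟩

section Symmetrization

variable {G Ω S Y' : Type*} [Group G] [MulAction G Ω] [MulAction G S] [DecidableEq S]
  [Fintype Ω] [Fintype Y']

def conjDecoder (d : Ω → Y' → S) (g : G) : Ω → Y' → S := fun ω y => g⁻¹ • d (g • ω) y

noncomputable def hitMass (q : Ω → Y' → ℝ) (d : Ω → Y' → S) (s : S) : ℝ :=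
  ∑ ω, ∑ y, if d ω y = s then q ω y else 0

lemma sum_conjDecoder_ne [Fintype S] (w : S → Ω → Y' → ℝ)
    (hw : ∀ (g : G) s ω y, w (g • s) (g • ω) y = w s ω y) (d : Ω → Y' → S) (g : G) :
    ∑ s, ∑ ω, ∑ y, (if conjDecoder d g ω y ≠ s then w s ω y else 0)
      = ∑ s, ∑ ω, ∑ y, (if d ω y ≠ s then w s ω y else 0) := by
  rw [← Equiv.sum_comp (MulAction.toPerm g⁻¹)]
  refine sum_congr rfl fun s _ => ?_
  rw [← Equiv.sum_comp (MulAction.toPerm g⁻¹)]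
  refine sum_congr rfl fun ω _ => sum_congr rfl fun y _ => ?_
  simp only [MulAction.toPerm_apply, conjDecoder, hw, smul_inv_smul, ne_eq, smul_left_cancel_iff]

lemma hitMass_conjDecoder_smul {q : Ω → Y' → ℝ} {h : G} (hq : ∀ ω y, q (h • ω) y = q ω y)
    (d : Ω → Y' → S) (g : G) (s : S) :
    hitMass q (conjDecoder d g) (h • s) = hitMass q (conjDecoder d (g * h)) s := by
  rw [hitMass, ← Equiv.sum_comp (MulAction.toPerm h)]
  refine sum_congr rfl fun ω _ => sum_congr rfl fun y _ => ?_
  simp only [MulAction.toPerm_apply, conjDecoder, hq, mul_inv_rev, mul_smul, inv_inv,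
    ← eq_inv_smul_iff]

lemma sum_hitMass_le {q : Ω → Y' → ℝ} (hq0 : ∀ ω y, 0 ≤ q ω y) (hq1 : ∑ ω, ∑ y, q ω y = 1)
    (d : Ω → Y' → S) (T : Finset S) : ∑ t ∈ T, hitMass q d t ≤ 1 := by
  calc ∑ t ∈ T, hitMass q d t = ∑ ω, ∑ y, if d ω y ∈ T then q ω y else 0 := by
        simp only [hitMass]
        rw [sum_comm]
        refine sum_congr rfl fun ω _ => ?_
        rw [sum_comm]
        exact sum_congr rfl fun y _ => sum_ite_eq T (d ω y) _
    _ ≤ ∑ ω, ∑ y, q ω y := by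
        gcongr with ω _ y
        split_ifs
        exacts [le_rfl, hq0 ω y]
    _ = 1 := hq1

/-- Averaged over the conjugated decoders, every point `h • s` of `T` is hit as often as `s`, and
distinct points of `T` are hit on disjoint events. -/
lemma card_mul_sum_hitMass_conjDecoder_le [Fintype G] {q : Ω → Y' → ℝ}
    (hq0 : ∀ ω y, 0 ≤ q ω y) (hq1 : ∑ ω, ∑ y, q ω y = 1) (d : Ω → Y' → S) (s : S)
    (T : Finset S) (hT : ∀ t ∈ T, ∃ h : G, h • s = t ∧ ∀ ω y, q (h • ω) y = q ω y) :
    T.card * ∑ g : G, hitMass q (conjDecoder d g) s ≤ Fintype.card G := by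
  set m := ∑ g : G, hitMass q (conjDecoder d g) s
  have hsame : ∀ t ∈ T, ∑ g : G, hitMass q (conjDecoder d g) t = m := by
    intro t ht
    obtain ⟨h, rfl, hq⟩ := hT t ht
    simp only [hitMass_conjDecoder_smul hq]
    exact Equiv.sum_comp (Equiv.mulRight h) fun g => hitMass q (conjDecoder d g) s
  calc (T.card : ℝ) * m = ∑ g, ∑ t ∈ T, hitMass q (conjDecoder d g) t := by
        rw [sum_comm, ← nsmul_eq_mul, ← sum_const (b := m), sum_congr rfl hsame]
    _ ≤ ∑ _g : G, (1 : ℝ) := sum_le_sum fun g _ => sum_hitMass_le hq0 hq1 _ T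
    _ = Fintype.card G := by simp

end Symmetrization

section IidMatrix

variable {ι α κ X : Type*}

def colRestrict (x : ι → α → X) (e : κ → α) : ι → κ → X := fun i t => x i (e t)

lemma colRestrict_smul (σ : Equiv.Perm α) (x : ι → α → X) (e : κ → α) :
    colRestrict (σ • x) e = colRestrict x (⇑σ⁻¹ ∘ e) := rfl

variable [Fintype ι] [Fintype α]

def matrixWeight (PX : X → ℝ) (x : ι → α → X) : ℝ := ∏ i, ∏ j, PX (x i j)

lemma sum_pi_prod_eq_one [DecidableEq ι] [Fintype X] {PX : X → ℝ} (hPX1 : ∑ a, PX a = 1) :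
    ∑ f : ι → X, ∏ i, PX (f i) = 1 := by
  rw [← Fintype.prod_sum (fun _ => PX), hPX1, prod_const_one]

lemma matrixWeight_nonneg {PX : X → ℝ} (hPX0 : ∀ a, 0 ≤ PX a) (x : ι → α → X) :
    0 ≤ matrixWeight PX x :=
  prod_nonneg fun _ _ => prod_nonneg fun _ _ => hPX0 _

lemma sum_matrixWeight [DecidableEq ι] [DecidableEq α] [Fintype X] {PX : X → ℝ}
    (hPX1 : ∑ a, PX a = 1) : ∑ x : ι → α → X, matrixWeight PX x = 1 := by
  simp only [matrixWeight]
  rw [← Fintype.prod_sum (κ := fun _ => α → X) (fun _ row => ∏ j, PX (row j)),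
    sum_pi_prod_eq_one hPX1, prod_const_one]

lemma matrixWeight_smul (PX : X → ℝ) (σ : Equiv.Perm α) (x : ι → α → X) :
    matrixWeight PX (σ • x) = matrixWeight PX x :=
  prod_congr rfl fun i _ => Equiv.prod_comp σ⁻¹ fun j => PX (x i j)

lemma sum_matrixWeight_mul_colRestrict [DecidableEq ι] [DecidableEq α] [Fintype X] [Finite κ]
    (PX : X → ℝ) {e e' : κ → α} (he : Function.Injective e) (he' : Function.Injective e')
    (F : (ι → κ → X) → ℝ) :
    ∑ x, matrixWeight PX x * F (colRestrict x e)
      = ∑ x, matrixWeight PX x * F (colRestrict x e') := by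
  obtain ⟨ρ, hρ⟩ := Equiv.Perm.exists_extending_pair e e' he he'
  rw [← Equiv.sum_comp (MulAction.toPerm ρ⁻¹)]
  refine sum_congr rfl fun x _ => ?_
  rw [MulAction.toPerm_apply, matrixWeight_smul, colRestrict_smul, inv_inv]
  congr 3
  exact funext hρ

end IidMatrix

section MarginalLikelihood

variable [Fintype X] {n k : ℕ} {PX : X → ℝ} {PY : Y → (Fin k → X) → (Fin k → B) → ℝ}

lemma margY_pos (hPX0 : ∀ a, 0 ≤ PX a) (hPX1 : ∑ a, PX a = 1) (hPY0 : ∀ y x b, 0 < PY y x b)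
    (sdif : Finset (Fin k)) (y : Y) (x : Fin k → X) (b : Fin k → B) :
    0 < margY PX PY sdif y x b := by
  obtain ⟨x', -, hx'⟩ := exists_lt_of_sum_lt (s := univ) (f := fun _ => (0 : ℝ))
    (g := fun x' : {i // i ∈ sdif} → X => ∏ i, PX (x' i))
    (by rw [sum_const_zero, sum_pi_prod_eq_one hPX1]; exact one_pos)
  exact sum_pos' (fun _ _ => mul_nonneg (prod_nonneg fun _ _ => hPX0 _) (hPY0 _ _ _).le)
    ⟨x', mem_univ _, mul_pos hx' (hPY0 _ _ _)⟩

lemma sum_margY [Fintype Y] (hPX1 : ∑ a, PX a = 1) (hPY1 : ∀ x b, ∑ y, PY y x b = 1)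
    (sdif : Finset (Fin k)) (x : Fin k → X) (b : Fin k → B) :
    ∑ y, margY PX PY sdif y x b = 1 := by
  simp only [margY]
  rw [sum_comm]
  refine (sum_congr rfl fun x' _ => ?_).trans (sum_pi_prod_eq_one hPX1)
  rw [← mul_sum, hPY1, mul_one]

lemma margY_congr (sdif : Finset (Fin k)) (y : Y) {x x' : Fin k → X} (b : Fin k → B)
    (h : ∀ i ∉ sdif, x i = x' i) :
    margY PX PY sdif y x b = margY PX PY sdif y x' b := by
  refine sum_congr rfl fun z _ => ?_
  congr 2
  funext i
  split_ifs with hi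
  · rfl
  · exact h i hi

lemma prod_le_of_infoDens_le (hPX0 : ∀ a, 0 ≤ PX a) (hPX1 : ∑ a, PX a = 1)
    (hPY0 : ∀ y x b, 0 < PY y x b) {sdif : Finset (Fin k)} {c δ : ℝ} (hc : 0 < c) (hδ : 0 < δ)
    {z : Fin n → Fin k → X} {y : Fin n → Y} {b : Fin k → B}
    (h : infoDens PX PY sdif z y b ≤ Real.log c + Real.log δ) :
    ∏ i, PY (y i) (z i) b ≤ c * δ * ∏ i, margY PX PY sdif (y i) (z i) b := by
  have hm : ∀ i, 0 < margY PX PY sdif (y i) (z i) b := fun i => margY_pos hPX0 hPX1 hPY0 _ _ _ _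
  have hM : 0 < ∏ i, margY PX PY sdif (y i) (z i) b := prod_pos fun i _ => hm i
  have hratio : infoDens PX PY sdif z y b
      = Real.log ((∏ i, PY (y i) (z i) b) / ∏ i, margY PX PY sdif (y i) (z i) b) := by
    rw [← prod_div_distrib, Real.log_prod fun i _ => (div_pos (hPY0 _ _ _) (hm i)).ne']
    rfl
  rw [hratio, ← Real.log_mul hc.ne' hδ.ne',
    Real.log_le_log_iff (div_pos (prod_pos fun i _ => hPY0 _ _ _) hM) (mul_pos hc hδ),
    div_le_iff₀ hM] at h
  exact h

end MarginalLikelihood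

section Likelihoods

variable {n p k : ℕ}

/-- Likelihood of the observations given the rows `z` of the measurement matrix restricted to the
support, `β_s` being averaged out. -/
noncomputable def obsLik [Fintype B] (Pβ : (Fin k → B) → ℝ)
    (PY : Y → (Fin k → X) → (Fin k → B) → ℝ) (z : Fin n → Fin k → X) (y : Fin n → Y) : ℝ :=
  ∑ b, Pβ b * ∏ i, PY (y i) (z i) b

/-- Likelihood of `(X, Y)` given `S = s`. -/
noncomputable def supportLik [Fintype B] (PX : X → ℝ) (Pβ : (Fin k → B) → ℝ)
    (PY : Y → (Fin k → X) → (Fin k → B) → ℝ) (s : Support p k) (x : Fin n → Fin p → X)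
    (y : Fin n → Y) : ℝ :=
  matrixWeight PX x * obsLik Pβ PY (colRestrict x (s.1.orderEmbOfFin s.2)) y

/-- `p.choose k` times the error probability of the decoder `d`. -/
noncomputable def errorMass [Fintype X] [Fintype B] [Fintype Y] (PX : X → ℝ)
    (Pβ : (Fin k → B) → ℝ) (PY : Y → (Fin k → X) → (Fin k → B) → ℝ)
    (d : (Fin n → Fin p → X) → (Fin n → Y) → Support p k) : ℝ :=
  ∑ s, ∑ x, ∑ y, if d x y ≠ s then supportLik PX Pβ PY s x y else 0

variable [Fintype B] {PX : X → ℝ} {Pβ : (Fin k → B) → ℝ}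
  {PY : Y → (Fin k → X) → (Fin k → B) → ℝ}

lemma obsLik_comp_perm (hPβperm : ∀ (σ : Equiv.Perm (Fin k)) b, Pβ (b ∘ σ) = Pβ b)
    (hPYperm : ∀ (σ : Equiv.Perm (Fin k)) y x b, PY y (x ∘ σ) (b ∘ σ) = PY y x b)
    (σ : Equiv.Perm (Fin k)) (z : Fin n → Fin k → X) (y : Fin n → Y) :
    obsLik Pβ PY (fun i => z i ∘ σ) y = obsLik Pβ PY z y := by
  rw [obsLik, ← Equiv.sum_comp (MulAction.toPerm σ⁻¹)]
  refine sum_congr rfl fun b _ => ?_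
  have hb : (MulAction.toPerm σ⁻¹ b : Fin k → B) = b ∘ σ := rfl
  rw [hb, hPβperm]
  simp only [hPYperm]

lemma obsLik_colRestrict_of_range_eq
    (hPβperm : ∀ (σ : Equiv.Perm (Fin k)) b, Pβ (b ∘ σ) = Pβ b)
    (hPYperm : ∀ (σ : Equiv.Perm (Fin k)) y x b, PY y (x ∘ σ) (b ∘ σ) = PY y x b)
    {e e' : Fin k → Fin p} (he : Function.Injective e) (he' : Function.Injective e')
    (h : Set.range e' = Set.range e) (x : Fin n → Fin p → X) (y : Fin n → Y) :
    obsLik Pβ PY (colRestrict x e') y = obsLik Pβ PY (colRestrict x e) y := by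
  obtain ⟨σ, rfl⟩ := exists_perm_comp_eq_of_range_eq he he' h
  exact obsLik_comp_perm hPβperm hPYperm σ (colRestrict x e) y

lemma supportLik_smul (hPβperm : ∀ (σ : Equiv.Perm (Fin k)) b, Pβ (b ∘ σ) = Pβ b)
    (hPYperm : ∀ (σ : Equiv.Perm (Fin k)) y x b, PY y (x ∘ σ) (b ∘ σ) = PY y x b)
    (g : Equiv.Perm (Fin p)) (s : Support p k) (x : Fin n → Fin p → X) (y : Fin n → Y) :
    supportLik PX Pβ PY (g • s) (g • x) y = supportLik PX Pβ PY s x y := by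
  rw [supportLik, supportLik, matrixWeight_smul, colRestrict_smul]
  congr 1
  refine obsLik_colRestrict_of_range_eq hPβperm hPYperm (RelEmbedding.injective _)
    (g⁻¹.injective.comp (RelEmbedding.injective _)) ?_ x y
  rw [Set.range_comp, range_orderEmbOfFin, range_orderEmbOfFin]
  change (g⁻¹ • ·) '' ((g • s.1 : Finset (Fin p)) : Set (Fin p)) = s.1
  rw [Set.image_smul, coe_smul_finset, inv_smul_smul]

variable [Fintype Y]

lemma sum_ite_ne_eq_supportLik (d : (Fin n → Fin p → X) → (Fin n → Y) → Support p k)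
    (s : Support p k) (x : Fin n → Fin p → X) :
    ∑ b, ∑ y, (if d x y ≠ s then matrixWeight PX x *
        (Pβ b * ∏ i, PY (y i) (colRestrict x (s.1.orderEmbOfFin s.2) i) b) else 0)
      = ∑ y, if d x y ≠ s then supportLik PX Pβ PY s x y else 0 := by
  rw [sum_comm]
  refine sum_congr rfl fun y _ => ?_
  rw [sum_ite_irrel, sum_const_zero, supportLik, obsLik, mul_sum]

variable [Fintype X]

lemma errorMass_conjDecoder (hPβperm : ∀ (σ : Equiv.Perm (Fin k)) b, Pβ (b ∘ σ) = Pβ b)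
    (hPYperm : ∀ (σ : Equiv.Perm (Fin k)) y x b, PY y (x ∘ σ) (b ∘ σ) = PY y x b)
    (d : (Fin n → Fin p → X) → (Fin n → Y) → Support p k) (g : Equiv.Perm (Fin p)) :
    errorMass PX Pβ PY (conjDecoder d g) = errorMass PX Pβ PY d :=
  sum_conjDecoder_ne _ (supportLik_smul hPβperm hPYperm) d g

lemma errorProb_eq (d : (Fin n → Fin p → X) → (Fin n → Y) → Support p k) :
    (∑ ω : Support p k × (Fin n → Fin p → X) × (Fin k → B) × (Fin n → Y),
      if d ω.2.1 ω.2.2.2 ≠ ω.1 then joint p k n PX Pβ PY ω else 0)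
      = (p.choose k : ℝ)⁻¹ * errorMass PX Pβ PY d := by
  simp only [Fintype.sum_prod_type, errorMass, mul_sum]
  refine sum_congr rfl fun s _ => sum_congr rfl fun x _ => ?_
  rw [← mul_sum, ← sum_ite_ne_eq_supportLik, mul_sum]
  refine sum_congr rfl fun b _ => ?_
  rw [mul_sum]
  refine sum_congr rfl fun y _ => ?_
  rw [mul_ite, mul_zero]
  simp only [joint, matrixWeight, mul_assoc]
  rfl

end Likelihoods

section ChangeOfMeasure

variable [Fintype X] {n p k : ℕ}

/-- Likelihood of `(X, Y)` given `S = s` and `β_s = b` when the observations are drawn from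
`P_{Y|X_{seq}β_s}`, i.e. see the columns of `s` indexed by `sdif` only through their average. -/
noncomputable def seqLik (PX : X → ℝ) (PY : Y → (Fin k → X) → (Fin k → B) → ℝ)
    (sdif : Finset (Fin k)) (s : Support p k) (b : Fin k → B) (x : Fin n → Fin p → X)
    (y : Fin n → Y) : ℝ :=
  matrixWeight PX x * ∏ i, margY PX PY sdif (y i) (colRestrict x (s.1.orderEmbOfFin s.2) i) b

variable {PX : X → ℝ} {PY : Y → (Fin k → X) → (Fin k → B) → ℝ}

lemma seqLik_nonneg (hPX0 : ∀ a, 0 ≤ PX a) (hPX1 : ∑ a, PX a = 1)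
    (hPY0 : ∀ y x b, 0 < PY y x b) (sdif : Finset (Fin k)) (s : Support p k) (b : Fin k → B)
    (x : Fin n → Fin p → X) (y : Fin n → Y) : 0 ≤ seqLik PX PY sdif s b x y :=
  mul_nonneg (matrixWeight_nonneg hPX0 x)
    (prod_nonneg fun _ _ => (margY_pos hPX0 hPX1 hPY0 _ _ _ _).le)

lemma seqLik_smul (sdif : Finset (Fin k)) (s : Support p k) (b : Fin k → B)
    {σ : Equiv.Perm (Fin p)}
    (hσ : ∀ u ∉ sdif, σ (s.1.orderEmbOfFin s.2 u) = s.1.orderEmbOfFin s.2 u)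
    (x : Fin n → Fin p → X) (y : Fin n → Y) :
    seqLik PX PY sdif s b (σ • x) y = seqLik PX PY sdif s b x y := by
  rw [seqLik, seqLik, matrixWeight_smul]
  refine congrArg _ (prod_congr rfl fun i _ => margY_congr sdif _ b fun u hu => ?_)
  exact congrArg (x i) (Equiv.Perm.inv_eq_iff_eq.2 (hσ u hu).symm)

variable [Fintype Y]

lemma sum_seqLik (hPX1 : ∑ a, PX a = 1) (hPY1 : ∀ x b, ∑ y, PY y x b = 1)
    (sdif : Finset (Fin k)) (s : Support p k) (b : Fin k → B) :
    ∑ x : Fin n → Fin p → X, ∑ y, seqLik PX PY sdif s b x y = 1 := by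
  refine (sum_congr rfl fun x _ => ?_).trans (sum_matrixWeight hPX1)
  simp only [seqLik]
  rw [← mul_sum, ← Fintype.prod_sum (κ := fun _ => Y)
    (fun i a => margY PX PY sdif a (colRestrict x (s.1.orderEmbOfFin s.2) i) b)]
  simp only [sum_margY hPX1 hPY1, prod_const_one, mul_one]

/-- The `C(p-k+ℓ, ℓ)` supports that share the columns of `s` outside `sdif` are images of `s`
under permutations that leave `seqLik` invariant. -/
lemma choose_mul_sum_hitMass_seqLik_le (hPX0 : ∀ a, 0 ≤ PX a) (hPX1 : ∑ a, PX a = 1)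
    (hPY0 : ∀ y x b, 0 < PY y x b) (hPY1 : ∀ x b, ∑ y, PY y x b = 1)
    (d : (Fin n → Fin p → X) → (Fin n → Y) → Support p k) (sdif : Finset (Fin k))
    (s : Support p k) (b : Fin k → B) :
    ((p - k + sdif.card).choose sdif.card : ℝ) *
        ∑ π : Equiv.Perm (Fin p), hitMass (seqLik PX PY sdif s b) (conjDecoder d π) s
      ≤ Fintype.card (Equiv.Perm (Fin p)) := by
  set w := sdifᶜ.map (s.1.orderEmbOfFin s.2).toEmbedding
  have hw : w.card = k - sdif.card := by
    rw [card_map, card_compl, Fintype.card_fin]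
  have hkp : k ≤ p := s.2 ▸ (card_le_univ s.1).trans_eq (Fintype.card_fin p)
  have hℓ : sdif.card ≤ k := (card_le_univ sdif).trans_eq (Fintype.card_fin k)
  have hT := card_filter_subset_eq_choose (k := k) w (hw ▸ Nat.sub_le k _)
  rw [hw, Fintype.card_fin, show p - (k - sdif.card) = p - k + sdif.card by omega,
    show k - (k - sdif.card) = sdif.card by omega] at hT
  rw [← hT]
  refine card_mul_sum_hitMass_conjDecoder_le (seqLik_nonneg hPX0 hPX1 hPY0 sdif s b)
    (sum_seqLik hPX1 hPY1 sdif s b) d s _ fun t ht => ?_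
  have hws : w ⊆ s.1 := fun a ha => by
    obtain ⟨u, -, rfl⟩ := mem_map.1 ha
    exact orderEmbOfFin_mem s.1 s.2 u
  obtain ⟨σ, hfix, hσ⟩ := exists_perm_fix_smul_eq hws (mem_filter.1 ht).2 (s.2.trans t.2.symm)
  exact ⟨σ, Subtype.ext hσ,
    seqLik_smul sdif s b fun u hu => hfix _ (mem_map_of_mem _ (mem_compl.2 hu))⟩

end ChangeOfMeasure

section Converse

variable [Fintype X] [Fintype B] [Fintype Y] {n p k : ℕ} {PX : X → ℝ}
  {Pβ : (Fin k → B) → ℝ} {PY : Y → (Fin k → X) → (Fin k → B) → ℝ}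

/-- On an event where the likelihood ratio against `seqLik` is at most `c b`, the decoder is
either wrong or outputs `s`, which costs the factor `c b` under `seqLik`. -/
lemma sum_typical_le (hPX0 : ∀ a, 0 ≤ PX a) (hPX1 : ∑ a, PX a = 1) (hPβ0 : ∀ b, 0 ≤ Pβ b)
    (hPY0 : ∀ y x b, 0 < PY y x b) (sdifF : (Fin k → B) → Finset (Fin k))
    (A : (Fin n → Fin k → X) → (Fin k → B) → (Fin n → Y) → Prop) {c : (Fin k → B) → ℝ}
    (hc : ∀ b, 0 ≤ c b)
    (hA : ∀ z b y, A z b y →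
      ∏ i, PY (y i) (z i) b ≤ c b * ∏ i, margY PX PY (sdifF b) (y i) (z i) b)
    (d : (Fin n → Fin p → X) → (Fin n → Y) → Support p k) (s : Support p k) :
    ∑ x, ∑ b, ∑ y, (if A (colRestrict x (s.1.orderEmbOfFin s.2)) b y then matrixWeight PX x *
        (Pβ b * ∏ i, PY (y i) (colRestrict x (s.1.orderEmbOfFin s.2) i) b) else 0)
      ≤ ∑ x, ∑ y, (if d x y ≠ s then supportLik PX Pβ PY s x y else 0)
        + ∑ b, Pβ b * c b * hitMass (seqLik PX PY (sdifF b) s b) d s := by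
  calc _ ≤ ∑ x, ∑ b, ∑ y, ((if d x y ≠ s then matrixWeight PX x *
          (Pβ b * ∏ i, PY (y i) (colRestrict x (s.1.orderEmbOfFin s.2) i) b) else 0)
          + Pβ b * c b * if d x y = s then seqLik PX PY (sdifF b) s b x y else 0) := by
        gcongr with x _ b _ y _
        have hW := matrixWeight_nonneg hPX0 x
        have hP : 0 ≤ ∏ i, PY (y i) (colRestrict x (s.1.orderEmbOfFin s.2) i) b :=
          prod_nonneg fun _ _ => (hPY0 _ _ _).le
        by_cases hd : d x y = s
        · simp only [hd, ne_eq, not_true_eq_false, if_false, if_true, zero_add]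
          split_ifs with hAx
          · calc matrixWeight PX x * (Pβ b * ∏ i, PY (y i) (colRestrict x _ i) b)
                ≤ matrixWeight PX x * (Pβ b * (c b * ∏ i, margY PX PY (sdifF b) (y i)
                    (colRestrict x (s.1.orderEmbOfFin s.2) i) b)) := by
                  gcongr
                  exacts [hPβ0 b, hA _ b y hAx]
              _ = _ := by rw [seqLik]; ring
          · exact mul_nonneg (mul_nonneg (hPβ0 b) (hc b))
              (seqLik_nonneg hPX0 hPX1 hPY0 (sdifF b) s b x y)
        · simp only [hd, ne_eq, not_false_eq_true, if_true, if_false, mul_zero, add_zero]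
          split_ifs
          exacts [le_rfl, mul_nonneg hW (mul_nonneg (hPβ0 b) hP)]
    _ = _ := by
        simp only [sum_add_distrib, sum_ite_ne_eq_supportLik]
        congr 1
        rw [sum_comm]
        simp only [hitMass, mul_sum]

lemma sum_typical_eq (hkp : k ≤ p) (A : (Fin n → Fin k → X) → (Fin k → B) → (Fin n → Y) → Prop)
    (s : Support p k) :
    (∑ ω : (Fin n → Fin p → X) × (Fin k → B) × (Fin n → Y),
      if A (colRestrict ω.1 (Fin.castLE hkp)) ω.2.1 ω.2.2 then cond hkp PX Pβ PY ω else 0)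
      = ∑ x, ∑ b, ∑ y, (if A (colRestrict x (s.1.orderEmbOfFin s.2)) b y then matrixWeight PX x *
        (Pβ b * ∏ i, PY (y i) (colRestrict x (s.1.orderEmbOfFin s.2) i) b) else 0) := by
  have h := sum_matrixWeight_mul_colRestrict PX (Fin.castLE_injective hkp)
    (s.1.orderEmbOfFin s.2).injective
    (fun z => ∑ b, ∑ y, if A z b y then Pβ b * ∏ i, PY (y i) (z i) b else 0)
  simp only [mul_sum, mul_ite, mul_zero] at h
  simp only [Fintype.sum_prod_type, cond, mul_assoc]
  exact h

lemma sum_choose_mul_sum_hitMass_le (hPX0 : ∀ a, 0 ≤ PX a) (hPX1 : ∑ a, PX a = 1)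
    (hPβ0 : ∀ b, 0 ≤ Pβ b) (hPβ1 : ∑ b, Pβ b = 1) (hPY0 : ∀ y x b, 0 < PY y x b)
    (hPY1 : ∀ x b, ∑ y, PY y x b = 1) {δ : ℝ} (hδ : 0 ≤ δ)
    (sdifF : (Fin k → B) → Finset (Fin k))
    (d : (Fin n → Fin p → X) → (Fin n → Y) → Support p k) :
    ∑ s : Support p k, ∑ b, Pβ b * (((p - k + (sdifF b).card).choose (sdifF b).card : ℝ) * δ *
        ∑ π : Equiv.Perm (Fin p), hitMass (seqLik PX PY (sdifF b) s b) (conjDecoder d π) s)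
      ≤ p.choose k * (Fintype.card (Equiv.Perm (Fin p)) * δ) := by
  calc _ ≤ ∑ _s : Support p k, ∑ b, Pβ b * (Fintype.card (Equiv.Perm (Fin p)) * δ) := by
        refine sum_le_sum fun s _ => sum_le_sum fun b _ => mul_le_mul_of_nonneg_left ?_ (hPβ0 b)
        rw [mul_right_comm]
        exact mul_le_mul_of_nonneg_right
          (choose_mul_sum_hitMass_seqLik_le hPX0 hPX1 hPY0 hPY1 d (sdifF b) s b) hδ
    _ = _ := by
        simp only [← sum_mul, hPβ1, one_mul, sum_const, card_univ, Fintype.card_finset_len,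
          Fintype.card_fin, nsmul_eq_mul]
        ring

lemma sum_typical_le_errorMass (hPX0 : ∀ a, 0 ≤ PX a) (hPX1 : ∑ a, PX a = 1)
    (hPβ0 : ∀ b, 0 ≤ Pβ b) (hPβ1 : ∑ b, Pβ b = 1)
    (hPβperm : ∀ (σ : Equiv.Perm (Fin k)) b, Pβ (b ∘ σ) = Pβ b)
    (hPY0 : ∀ y x b, 0 < PY y x b) (hPY1 : ∀ x b, ∑ y, PY y x b = 1)
    (hPYperm : ∀ (σ : Equiv.Perm (Fin k)) y x b, PY y (x ∘ σ) (b ∘ σ) = PY y x b)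
    (hkp : k ≤ p) {δ : ℝ} (hδ : 0 ≤ δ) (sdifF : (Fin k → B) → Finset (Fin k))
    (A : (Fin n → Fin k → X) → (Fin k → B) → (Fin n → Y) → Prop)
    (hA : ∀ z b y, A z b y → ∏ i, PY (y i) (z i) b ≤
      ((p - k + (sdifF b).card).choose (sdifF b).card : ℝ) * δ *
        ∏ i, margY PX PY (sdifF b) (y i) (z i) b)
    (d : (Fin n → Fin p → X) → (Fin n → Y) → Support p k) :
    (∑ ω : (Fin n → Fin p → X) × (Fin k → B) × (Fin n → Y),
      if A (colRestrict ω.1 (Fin.castLE hkp)) ω.2.1 ω.2.2 then cond hkp PX Pβ PY ω else 0)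
      ≤ (p.choose k : ℝ)⁻¹ * errorMass PX Pβ PY d + δ := by
  set R := ∑ ω : (Fin n → Fin p → X) × (Fin k → B) × (Fin n → Y),
    if A (colRestrict ω.1 (Fin.castLE hkp)) ω.2.1 ω.2.2 then cond hkp PX Pβ PY ω else 0
  set N : ℝ := (Fintype.card (Equiv.Perm (Fin p)) : ℝ)
  set C : ℝ := (p.choose k : ℝ)
  set Cl : (Fin k → B) → ℝ := fun b => ((p - k + (sdifF b).card).choose (sdifF b).card : ℝ)
  set hit := fun (π : Equiv.Perm (Fin p)) (s : Support p k) b =>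
    hitMass (seqLik PX PY (sdifF b) s b) (conjDecoder d π) s
  have hbound : ∀ π s, R ≤ ∑ x, ∑ y, (if conjDecoder d π x y ≠ s then
      supportLik PX Pβ PY s x y else 0) + ∑ b, Pβ b * (Cl b * δ) * hit π s b := fun π s =>
    (sum_typical_eq hkp A s).trans_le (sum_typical_le hPX0 hPX1 hPβ0 hPY0 sdifF A
      (fun b => by positivity) hA (conjDecoder d π) s)
  have hC : 0 < C := Nat.cast_pos.2 (Nat.choose_pos hkp)
  have hN : 0 < N := Nat.cast_pos.2 Fintype.card_pos
  refine le_of_mul_le_mul_left ?_ (mul_pos hC hN)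
  calc C * N * R = ∑ s : Support p k, ∑ π : Equiv.Perm (Fin p), R := by
        simp only [sum_const, card_univ, Fintype.card_finset_len, Fintype.card_fin, nsmul_eq_mul,
          C, N]
        ring
    _ ≤ ∑ s, ∑ π, (∑ x, ∑ y, (if conjDecoder d π x y ≠ s then supportLik PX Pβ PY s x y
          else 0) + ∑ b, Pβ b * (Cl b * δ) * hit π s b) := by
        gcongr with s _ π _
        exact hbound π s
    _ = ∑ π, errorMass PX Pβ PY (conjDecoder d π)
          + ∑ s, ∑ b, Pβ b * (Cl b * δ * ∑ π, hit π s b) := by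
        simp only [sum_add_distrib]
        congr 1
        · rw [sum_comm]
          rfl
        · refine sum_congr rfl fun s _ => ?_
          rw [sum_comm]
          simp only [mul_sum, mul_assoc]
    _ ≤ N * errorMass PX Pβ PY d + C * (N * δ) := by
        simp only [errorMass_conjDecoder hPβperm hPYperm, sum_const, card_univ, nsmul_eq_mul]
        exact add_le_add_right
          (sum_choose_mul_sum_hitMass_le hPX0 hPX1 hPβ0 hPβ1 hPY0 hPY1 hδ sdifF d) _
    _ = C * N * (C⁻¹ * errorMass PX Pβ PY d + δ) := by
        field_simp

end Converse

theorem converse_general (p k n : ℕ) (hkp : k ≤ p)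
    [Fintype X] [Fintype B] [Fintype Y]
    (PX : X → ℝ) (hPX0 : ∀ x, 0 ≤ PX x) (hPX1 : ∑ x, PX x = 1)
    (Pβ : (Fin k → B) → ℝ) (hPβ0 : ∀ b, 0 ≤ Pβ b) (hPβ1 : ∑ b, Pβ b = 1)
    (hPβperm : ∀ (σ : Equiv.Perm (Fin k)) (b : Fin k → B), Pβ (b ∘ σ) = Pβ b)
    (PY : Y → (Fin k → X) → (Fin k → B) → ℝ)
    (hPY0 : ∀ y x b, 0 < PY y x b) (hPY1 : ∀ x b, ∑ y, PY y x b = 1)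
    (hPYperm : ∀ (σ : Equiv.Perm (Fin k)) (y : Y) (x : Fin k → X) (b : Fin k → B),
      PY y (x ∘ σ) (b ∘ σ) = PY y x b)
    (δ₁ : ℝ) (hδ₁ : 0 < δ₁)
    -- an arbitrary partition (sdif(b), seq(b)) of s = {1,…,k} with sdif(b) ≠ ∅
    (sdifF : (Fin k → B) → Finset (Fin k))
    -- any decoder
    (d : (Fin n → Fin p → X) → (Fin n → Y) → {s : Finset (Fin p) // s.card = k}) :
    -- pe  =  P[d(X, Y) ≠ S]
    (∑ ω : {s : Finset (Fin p) // s.card = k} ×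
        (Fin n → Fin p → X) × (Fin k → B) × (Fin n → Y),
      if d ω.2.1 ω.2.2.2 ≠ ω.1 then joint p k n PX Pβ PY ω else 0)
    ≥
    -- P[ ι^n(X_{sdif(β_s)}; Y | X_{seq(β_s)}, β_s) ≤ log C(p−k+ℓ, ℓ) + log δ₁ | S = s ]
    (∑ ω : (Fin n → Fin p → X) × (Fin k → B) × (Fin n → Y),
      if infoDens PX PY (sdifF ω.2.1) (fun i t => ω.1 i (Fin.castLE hkp t)) ω.2.2 ω.2.1
          ≤ Real.log (((p - k + (sdifF ω.2.1).card).choose ((sdifF ω.2.1).card) : ℝ))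
            + Real.log δ₁
        then cond hkp PX Pβ PY ω else 0)
    - δ₁ := by
  rw [ge_iff_le, sub_le_iff_le_add, errorProb_eq]
  exact sum_typical_le_errorMass hPX0 hPX1 hPβ0 hPβ1 hPβperm hPY0 hPY1 hPYperm hkp hδ₁.le sdifF _
    (fun _ _ _ h => prod_le_of_infoDens_le hPX0 hPX1 hPY0
      (Nat.cast_pos.2 (Nat.choose_pos (Nat.le_add_left _ _))) hδ₁ h) d

/-- Theorem 2 (converse), finite-alphabet form. -/
theorem converse (p k n : ℕ) (hk : 1 ≤ k) (hkp : k ≤ p) (hn : 1 ≤ n)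
    [Fintype X] [Fintype B] [Fintype Y] [Nonempty X] [Nonempty B] [Nonempty Y]
    (PX : X → ℝ) (hPX0 : ∀ x, 0 ≤ PX x) (hPX1 : ∑ x, PX x = 1)
    (Pβ : (Fin k → B) → ℝ) (hPβ0 : ∀ b, 0 ≤ Pβ b) (hPβ1 : ∑ b, Pβ b = 1)
    (hPβperm : ∀ (σ : Equiv.Perm (Fin k)) (b : Fin k → B), Pβ (b ∘ σ) = Pβ b)
    (PY : Y → (Fin k → X) → (Fin k → B) → ℝ)
    (hPY0 : ∀ y x b, 0 < PY y x b) (hPY1 : ∀ x b, ∑ y, PY y x b = 1)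
    (hPYperm : ∀ (σ : Equiv.Perm (Fin k)) (y : Y) (x : Fin k → X) (b : Fin k → B),
      PY y (x ∘ σ) (b ∘ σ) = PY y x b)
    (δ₁ : ℝ) (hδ₁ : 0 < δ₁)
    -- an arbitrary partition (sdif(b), seq(b)) of s = {1,…,k} with sdif(b) ≠ ∅
    (sdifF : (Fin k → B) → Finset (Fin k)) (hsdifF : ∀ b, (sdifF b).Nonempty)
    -- any decoder
    (d : (Fin n → Fin p → X) → (Fin n → Y) → {s : Finset (Fin p) // s.card = k}) :
    -- pe  =  P[d(X, Y) ≠ S]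
    (∑ ω : {s : Finset (Fin p) // s.card = k} ×
        (Fin n → Fin p → X) × (Fin k → B) × (Fin n → Y),
      if d ω.2.1 ω.2.2.2 ≠ ω.1 then joint p k n PX Pβ PY ω else 0)
    ≥
    -- P[ ι^n(X_{sdif(β_s)}; Y | X_{seq(β_s)}, β_s) ≤ log C(p−k+ℓ, ℓ) + log δ₁ | S = s ]
    (∑ ω : (Fin n → Fin p → X) × (Fin k → B) × (Fin n → Y),
      if infoDens PX PY (sdifF ω.2.1) (fun i t => ω.1 i (Fin.castLE hkp t)) ω.2.2 ω.2.1
          ≤ Real.log (((p - k + (sdifF ω.2.1).card).choose ((sdifF ω.2.1).card) : ℝ))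
            + Real.log δ₁
        then cond hkp PX Pβ PY ω else 0)
    - δ₁ :=
  converse_general p k n hkp PX hPX0 hPX1 Pβ hPβ0 hPβ1 hPβperm PY hPY0 hPY1 hPYperm δ₁ hδ₁ sdifF d

end SupportRecoveryConv
end

section
/- For every ρ ∈ (0, 1/2), one has (1 − 2ρ)·log((1−ρ)/ρ) ≥ 4·(log 2 − H₂(ρ)). -/
/-!
The function `φ(y) = (1 - 2y) log((1 - y)/y) + 4 H₂(y)` has derivative `2 log t - (t - t⁻¹)` at `y`,
where `t = (1 - y)/y`. For `y ≤ 1/2` we have `t ≥ 1`, so this is `≤ 0` because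
`log t ≤ sinh (log t) = (t - t⁻¹)/2`. Hence `φ` decreases on `(0, 1/2]` and `φ(ρ) ≥ φ(1/2) = 4 log 2`.
-/

/-- Binary entropy function with natural logarithm. -/
noncomputable def binH (q : ℝ) : ℝ := -q * Real.log q - (1 - q) * Real.log (1 - q)

open Real Set

lemma binH_eq_binEntropy : binH = binEntropy := by
  ext q
  simp only [binH, binEntropy, log_inv]
  ring

lemma two_mul_log_le_sub_inv {x : ℝ} (hx : 1 ≤ x) : 2 * log x ≤ x - x⁻¹ := by
  have h := self_le_sinh_iff.2 (log_nonneg hx)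
  rw [sinh_log (by linarith)] at h
  linarith

noncomputable def entropyGapPotential (y : ℝ) : ℝ :=
  (1 - 2 * y) * log ((1 - y) / y) + 4 * binEntropy y

lemma hasDerivAt_entropyGapPotential {y : ℝ} (hy₀ : y ≠ 0) (hy₁ : y ≠ 1) :
    HasDerivAt entropyGapPotential
      (2 * log ((1 - y) / y) - ((1 - y) / y - ((1 - y) / y)⁻¹)) y := by
  have hy₁' : 1 - y ≠ 0 := sub_ne_zero.2 (Ne.symm hy₁)
  have hratio : HasDerivAt (fun y : ℝ => (1 - y) / y) ((-1 * y - (1 - y) * 1) / y ^ 2) y :=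
    ((hasDerivAt_id' y).const_sub 1).div (hasDerivAt_id' y) hy₀
  have hlog := hratio.log (div_ne_zero hy₁' hy₀)
  have hlin : HasDerivAt (fun y : ℝ => 1 - 2 * y) (-2) y := by
    simpa using ((hasDerivAt_id y).const_mul 2).const_sub 1
  refine (hlin.mul hlog).add ((hasDerivAt_binEntropy hy₀ hy₁).const_mul 4) |>.congr_deriv ?_
  rw [← log_div hy₁' hy₀]
  field_simp
  ring

lemma antitoneOn_entropyGapPotential : AntitoneOn entropyGapPotential (Ioc 0 (1 / 2)) := by
  have hderiv : ∀ y ∈ Ioc (0 : ℝ) (1 / 2), HasDerivAt entropyGapPotential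
      (2 * log ((1 - y) / y) - ((1 - y) / y - ((1 - y) / y)⁻¹)) y := fun y hy =>
    hasDerivAt_entropyGapPotential hy.1.ne' (by linarith [hy.2])
  refine antitoneOn_of_hasDerivWithinAt_nonpos (convex_Ioc 0 (1 / 2))
    (fun y hy => (hderiv y hy).continuousAt.continuousWithinAt)
    (fun y hy => (hderiv y (interior_subset hy)).hasDerivWithinAt)
    (fun y hy => ?_)
  rw [interior_Ioc] at hy
  have ht : 1 ≤ (1 - y) / y := by
    rw [le_div_iff₀ hy.1]
    linarith [hy.2]
  linarith [two_mul_log_le_sub_inv ht]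

lemma entropyGapPotential_half : entropyGapPotential (1 / 2) = 4 * log 2 := by
  rw [entropyGapPotential, one_div, binEntropy_two_inv]
  norm_num

theorem gt_entropy_inequality (ρ : ℝ) (h0 : 0 < ρ) (h1 : ρ < 1 / 2) :
    (1 - 2 * ρ) * Real.log ((1 - ρ) / ρ) ≥ 4 * (Real.log 2 - binH ρ) := by
  have h := antitoneOn_entropyGapPotential ⟨h0, h1.le⟩ ⟨by norm_num, le_rfl⟩ h1.le
  rw [entropyGapPotential_half, entropyGapPotential, ← binH_eq_binEntropy] at h
  linarith
end

section
/- The function λ ↦ (λ·log(1/λ)) / H₂(λ) is antitone (monotonically nonincreasing) on the open interval (0,1). -/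
open Real

noncomputable def logSlope (y : ℝ) : ℝ := log y / (y - 1)

lemma logSlope_antitoneOn : AntitoneOn logSlope (Set.Ioi 0 \ {1}) := by
  rintro x ⟨hx, hx1⟩ y ⟨hy, hy1⟩ hxy
  have h := strictConcaveOn_log_Ioi.concaveOn.neg.secant_mono (a := 1) (by norm_num)
    hx hy hx1 hy1 hxy
  simp only [Pi.neg_apply, log_one, neg_zero, sub_zero, neg_div] at h
  exact neg_le_neg_iff.mp h

lemma logSlope_pos {y : ℝ} (hy : 0 < y) (hy1 : y ≠ 1) : 0 < logSlope y := by
  rcases hy1.lt_or_gt with hlt | hgt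
  · exact div_pos_of_neg_of_neg (log_neg hy hlt) (by linarith)
  · exact div_pos (log_pos hgt) (by linarith)

lemma div_add_le_div_add {p q p' q' : ℝ} (hp' : 0 < p') (hq : 0 ≤ q) (hp : p' ≤ p)
    (hq' : q ≤ q') : p' / (p' + q') ≤ p / (p + q) := by
  rw [div_le_div_iff₀ (by linarith) (by linarith)]
  nlinarith [mul_le_mul hp hq' hq (hp'.le.trans hp)]

lemma binH_pos {q : ℝ} (hq0 : 0 < q) (hq1 : q < 1) : 0 < binH q := by
  have h0 := mul_pos hq0 (neg_pos.mpr (log_neg hq0 hq1))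
  have h1 := mul_pos (sub_pos.mpr hq1) (neg_pos.mpr (log_neg (sub_pos.mpr hq1) (by linarith)))
  unfold binH
  linarith

lemma mul_log_inv_div_binH_eq {l : ℝ} (hl0 : 0 < l) (hl1 : l < 1) :
    l * log (1 / l) / binH l = logSlope l / (logSlope l + logSlope (1 - l)) := by
  have h1 : l - 1 ≠ 0 := by linarith
  have h2 : 1 - l - 1 ≠ 0 := by linarith
  have hsum : logSlope l + logSlope (1 - l) ≠ 0 :=
    (add_pos (logSlope_pos hl0 hl1.ne) (logSlope_pos (by linarith) (by linarith))).ne'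
  rw [div_eq_div_iff ?_ hsum]
  · simp only [logSlope, binH, one_div, log_inv]
    field_simp
    ring
  · exact (binH_pos hl0 hl1).ne'

theorem antitone_ratio_entropy :
    AntitoneOn (fun l : ℝ => (l * Real.log (1 / l)) / binH l) (Set.Ioo 0 1) := by
  rintro x ⟨hx0, hx1⟩ y ⟨hy0, hy1⟩ hxy
  dsimp only
  rw [mul_log_inv_div_binH_eq hx0 hx1, mul_log_inv_div_binH_eq hy0 hy1]
  exact div_add_le_div_add (logSlope_pos hy0 hy1.ne) (logSlope_pos (by linarith) (by linarith)).le
    (logSlope_antitoneOn ⟨hx0, hx1.ne⟩ ⟨hy0, hy1.ne⟩ hxy)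
    (logSlope_antitoneOn ⟨sub_pos.2 hy1, (by linarith : 1 - y ≠ 1)⟩
      ⟨sub_pos.2 hx1, (by linarith : 1 - x ≠ 1)⟩ (by linarith))
end

section
/- Fix a real ν > 0. Let (k_j) and (ℓ_j) be sequences of positive integers with k_j → ∞, 1 ≤ ℓ_j ≤ k_j for all j, and ℓ_j / k_j → 0. Then the ratio [ (1 − ν/k_j)^{k_j − ℓ_j} · H₂( (1 − ν/k_j)^{ℓ_j} ) ] / [ e^{−ν} · ν · (ℓ_j/k_j) · log(k_j/ℓ_j) ] converges to 1 as j → ∞. -/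
/-!
Write `y = 1 - ν/k` and `r = l/k`. The factor `y^(k-l)` tends to `e^(-ν)`, while the bounds
`l(1 - y)y^l ≤ 1 - y^l ≤ l(1 - y)` give `1 - y^l ~ l(1 - y) = νr`. Since `H₂` is symmetric
and `H₂(u) ~ -u log u` as `u → 0⁺`, this yields `H₂(y^l) ~ νr · (-log r) = νr · log(k/l)`: the
factor `ν` inside the logarithm only shifts it by a constant, negligible as `log r → -∞`.
-/

open Filter Topology Asymptotics Real

lemma binH_eq_negMulLog_add (q : ℝ) : binH q = negMulLog q + negMulLog (1 - q) := by
  simp only [binH, negMulLog]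
  ring

lemma binH_one_sub (q : ℝ) : binH (1 - q) = binH q := by
  rw [binH_eq_negMulLog_add, binH_eq_negMulLog_add, sub_sub_cancel, add_comm]

lemma isLittleO_id_negMulLog_nhdsGT_zero : (fun u : ℝ => u) =o[𝓝[>] 0] negMulLog := by
  have hlog : Tendsto (fun u => ‖-log u‖) (𝓝[>] 0) atTop := by
    simpa only [norm_neg, Real.norm_eq_abs, Function.comp_def] using
      tendsto_abs_atBot_atTop.comp tendsto_log_nhdsGT_zero
  exact ((isBigO_refl _ _).mul_isLittleO ((isLittleO_one_left_iff ℝ).mpr hlog)).congr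
    (fun u => mul_one u) (fun u => (neg_mul_comm u (log u)).symm)

lemma isEquivalent_binH_negMulLog_nhdsGT_zero : binH ~[𝓝[>] 0] negMulLog := by
  have hsmall : (fun u => negMulLog (1 - u)) =O[𝓝[>] 0] fun u : ℝ => u := by
    refine IsBigO.of_bound' ?_
    filter_upwards [inter_mem_nhdsWithin (Set.Ioi 0) (Iio_mem_nhds one_pos)] with u ⟨hu0, hu1⟩
    have h1u : 0 ≤ 1 - u := by linarith [hu1.out]
    rw [Real.norm_of_nonneg (negMulLog_nonneg h1u (by linarith [hu0.out])),
      Real.norm_of_nonneg (le_of_lt hu0)]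
    simpa using negMulLog_le_one_sub_self h1u
  exact (IsEquivalent.refl.add_isLittleO
    (hsmall.trans_isLittleO isLittleO_id_negMulLog_nhdsGT_zero)).congr_left
    (Eventually.of_forall fun u => (binH_eq_negMulLog_add u).symm)

lemma one_sub_pow_le_mul_one_sub {y : ℝ} (hy : -1 ≤ y) (n : ℕ) : 1 - y ^ n ≤ n * (1 - y) := by
  nlinarith [one_add_mul_sub_le_pow hy n]

lemma mul_one_sub_mul_pow_le_one_sub_pow {y : ℝ} (hy : 0 ≤ y) (n : ℕ) :
    n * (1 - y) * y ^ n ≤ 1 - y ^ n := by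
  induction n with
  | zero => simp
  | succ n ih =>
    have hyn : 0 ≤ y ^ n := pow_nonneg hy n
    push_cast
    rw [pow_succ]
    nlinarith [mul_nonneg (mul_nonneg (n.cast_add_one_pos (α := ℝ)).le hyn) (sq_nonneg (1 - y))]

lemma abs_one_sub_pow_sub_le {y : ℝ} (hy0 : 0 ≤ y) (hy1 : y ≤ 1) (n : ℕ) :
    |(1 - y ^ n) - n * (1 - y)| ≤ (n * (1 - y)) ^ 2 := by
  have hup := one_sub_pow_le_mul_one_sub (by linarith) n
  have hlow := mul_one_sub_mul_pow_le_one_sub_pow hy0 n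
  have hv : 0 ≤ (n : ℝ) * (1 - y) := mul_nonneg n.cast_nonneg (by linarith)
  rw [abs_of_nonpos (by linarith)]
  nlinarith

section

variable {α : Type*} {l : Filter α}

lemma isEquivalent_one_sub_pow {y : α → ℝ} {n : α → ℕ}
    (hy : ∀ᶠ a in l, 0 ≤ y a ∧ y a ≤ 1) (hn : Tendsto (fun a => n a * (1 - y a)) l (𝓝 0)) :
    (fun a => 1 - y a ^ n a) ~[l] fun a => n a * (1 - y a) := by
  have hsq : (fun a => (1 - y a ^ n a) - n a * (1 - y a)) =O[l] fun a => (n a * (1 - y a)) ^ 2 := by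
    refine IsBigO.of_bound' ?_
    filter_upwards [hy] with a ⟨h0, h1⟩
    rw [Real.norm_eq_abs, Real.norm_of_nonneg (sq_nonneg _)]
    exact abs_one_sub_pow_sub_le h0 h1 (n a)
  refine hsq.trans_isLittleO ?_
  simpa only [sq, one_mul] using
    (isLittleO_one_iff ℝ |>.mpr hn).mul_isBigO (isBigO_refl (fun a => n a * (1 - y a)) l)

lemma isEquivalent_log_of_isEquivalent_const_mul {u v : α → ℝ} {c : ℝ}
    (hc : c ≠ 0) (huv : u ~[l] fun a => c * v a) (hv : Tendsto v l (𝓝[≠] 0)) :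
    (fun a => log (u a)) ~[l] fun a => log (v a) := by
  have hv0 : ∀ᶠ a in l, v a ≠ 0 := hv.eventually self_mem_nhdsWithin
  have hdiv : Tendsto (fun a => u a / v a) l (𝓝 c) := by
    have := (huv.div (IsEquivalent.refl (u := v))).congr_right (w := fun _ => c)
      (hv0.mono fun a ha => mul_div_cancel_right₀ c ha)
    exact this.tendsto_const
  have hlogv : Tendsto (fun a => ‖log (v a)‖) l atTop :=
    tendsto_abs_atBot_atTop.comp (tendsto_log_nhdsNE_zero.comp hv)
  have hsmall : (fun a => log (u a / v a)) =o[l] fun a => log (v a) :=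
    ((continuousAt_log hc).tendsto.comp hdiv).isBigO_one ℝ |>.trans_isLittleO
      ((isLittleO_one_left_iff ℝ).mpr hlogv)
  refine (hsmall.add_isEquivalent IsEquivalent.refl).congr_left ?_
  filter_upwards [hv0, hdiv.eventually_ne hc] with a hva hdiv
  have hua : u a ≠ 0 := fun h => hdiv (by simp [h])
  simp [log_div hua hva]

lemma isEquivalent_binH_of_isEquivalent_one_sub {q r : α → ℝ} {c : ℝ} (hc : c ≠ 0)
    (hq : ∀ᶠ a in l, q a < 1) (hqr : (fun a => 1 - q a) ~[l] fun a => c * r a)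
    (hr : Tendsto r l (𝓝[≠] 0)) :
    (fun a => binH (q a)) ~[l] fun a => c * r a * -log (r a) := by
  have hq0 : Tendsto (fun a => 1 - q a) l (𝓝[>] 0) := by
    refine tendsto_nhdsWithin_iff.mpr
      ⟨hqr.symm.tendsto_nhds ?_, hq.mono fun a ha => sub_pos.mpr ha⟩
    simpa using (hr.mono_right nhdsWithin_le_nhds).const_mul c
  have hlog := isEquivalent_log_of_isEquivalent_const_mul hc hqr hr
  refine ((isEquivalent_binH_negMulLog_nhdsGT_zero.comp_tendsto hq0).congr_left
      (Eventually.of_forall fun a => binH_one_sub (q a))).trans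
    ((hqr.mul hlog.neg).congr_left (Eventually.of_forall fun a => ?_))
  simp only [Pi.mul_apply, Function.comp_apply, negMulLog, neg_mul_comm]

end

lemma tendsto_one_sub_div_pow_sub_exp {α : Type*} {f : Filter α} {k l : α → ℕ} {ν : ℝ}
    (hk : Tendsto k f atTop) (hlk : ∀ a, l a ≤ k a)
    (hl : Tendsto (fun a => (1 - ν / k a) ^ l a) f (𝓝 1)) :
    Tendsto (fun a => (1 - ν / k a) ^ (k a - l a)) f (𝓝 (exp (-ν))) := by
  have hpow : Tendsto (fun a => (1 - ν / k a) ^ k a) f (𝓝 (exp (-ν))) := by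
    simpa only [Function.comp_def, neg_div, ← sub_eq_add_neg] using
      (tendsto_one_add_div_pow_exp (-ν)).comp hk
  have hquot := hpow.div hl one_ne_zero
  rw [div_one] at hquot
  refine hquot.congr' ?_
  filter_upwards [hl.eventually_ne one_ne_zero] with a ha
  exact (eq_div_of_mul_eq ha (pow_sub_mul_pow _ (hlk a))).symm

theorem gt_mutual_information_small_ratio (ν : ℝ) (hν : 0 < ν)
    (k l : ℕ → ℕ) (hk1 : ∀ j, 1 ≤ k j) (hl1 : ∀ j, 1 ≤ l j) (hlk : ∀ j, l j ≤ k j)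
    (hktop : Filter.Tendsto k Filter.atTop Filter.atTop)
    (hratio : Filter.Tendsto (fun j => (l j : ℝ) / (k j : ℝ)) Filter.atTop (nhds 0)) :
    Filter.Tendsto
      (fun j => ((1 - ν / (k j : ℝ)) ^ (k j - l j) * binH ((1 - ν / (k j : ℝ)) ^ (l j)))
        / (Real.exp (-ν) * ν * ((l j : ℝ) / (k j : ℝ)) * Real.log ((k j : ℝ) / (l j : ℝ))))
      Filter.atTop (nhds 1) := by
  set y : ℕ → ℝ := fun j => 1 - ν / k j
  set r : ℕ → ℝ := fun j => (l j : ℝ) / k j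
  have hr : Tendsto r atTop (𝓝[≠] 0) := tendsto_nhdsWithin_iff.mpr ⟨hratio,
    Eventually.of_forall fun j => div_ne_zero
      (Nat.cast_ne_zero.mpr (Nat.one_le_iff_ne_zero.mp (hl1 j)))
      (Nat.cast_ne_zero.mpr (Nat.one_le_iff_ne_zero.mp (hk1 j)))⟩
  have hy : ∀ᶠ j in atTop, 0 ≤ y j ∧ y j < 1 := by
    filter_upwards [(tendsto_natCast_atTop_atTop.comp hktop).eventually_ge_atTop ν] with j hj
    have hk0 : (0 : ℝ) < k j := by exact_mod_cast hk1 j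
    exact ⟨sub_nonneg.mpr ((div_le_one hk0).mpr hj), sub_lt_self _ (div_pos hν hk0)⟩
  have hgap : (fun j => 1 - y j ^ l j) ~[atTop] fun j => ν * r j := by
    have hlr : ∀ j, (l j : ℝ) * (1 - y j) = ν * r j := fun j => by simp only [y, r]; ring
    have := isEquivalent_one_sub_pow (n := l) (hy.mono fun j hj => ⟨hj.1, hj.2.le⟩)
      (by simpa only [hlr, mul_zero] using hratio.const_mul ν)
    simpa only [hlr] using this
  have hbin : (fun j => binH (y j ^ l j)) ~[atTop] fun j => ν * r j * -log (r j) :=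
    isEquivalent_binH_of_isEquivalent_one_sub hν.ne'
      (hy.mono fun j hj => pow_lt_one₀ hj.1 hj.2 (Nat.one_le_iff_ne_zero.mp (hl1 j))) hgap hr
  have hq1 : Tendsto (fun j => y j ^ l j) atTop (𝓝 1) := by
    have hgap0 : Tendsto (fun j => 1 - y j ^ l j) atTop (𝓝 0) :=
      hgap.symm.tendsto_nhds (by simpa using hratio.const_mul ν)
    simpa using hgap0.const_sub 1
  have hfactor : Tendsto (fun j => y j ^ (k j - l j)) atTop (𝓝 (exp (-ν))) :=
    tendsto_one_sub_div_pow_sub_exp hktop hlk hq1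
  have hL : ∀ j, log ((k j : ℝ) / l j) = -log (r j) := fun j => by rw [← log_inv, inv_div]
  have hnum : (fun j => y j ^ (k j - l j) * binH (y j ^ l j)) ~[atTop]
      fun j => exp (-ν) * ν * r j * log ((k j : ℝ) / l j) := by
    refine (((isEquivalent_const_iff_tendsto (exp_pos _).ne').mpr hfactor).mul hbin).congr_right
      (Eventually.of_forall fun j => ?_)
    simp only [Pi.mul_apply, Function.const_apply, hL]
    ring
  have hden : ∀ᶠ j in atTop, exp (-ν) * ν * r j * log ((k j : ℝ) / l j) ≠ 0 := by
    filter_upwards [(tendsto_log_nhdsNE_zero.comp hr).eventually_lt_atBot 0,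
      hr.eventually self_mem_nhdsWithin] with j hlog hr0
    rw [hL]
    exact mul_ne_zero (mul_ne_zero (mul_ne_zero (exp_pos _).ne' hν.ne') hr0)
      (neg_ne_zero.mpr hlog.ne)
  exact (isEquivalent_iff_tendsto_one hden).mp hnum
end

section
/- Let σ > 0 and a > 0 be reals, and let Z₁, Z₂ be independent standard normal random variables. Define W := (a²/(2(σ² + a²))) · (Z₂² − Z₁²) + (σa/(σ² + a²)) · Z₁Z₂ and c := a(σ + a)/(σ² + a²). Then E[W²] ≤ 6c², and for every integer q ≥ 2, E[|W|^q] ≤ 2 · (2c)^q · q!. -/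
open MeasureTheory ProbabilityTheory Real Set
open scoped ENNReal NNReal

namespace InfoDensityAux

lemma pdf_eq (x : ℝ) :
    gaussianPDFReal 0 1 x = (Real.sqrt (2 * π))⁻¹ * Real.exp (-(1/2) * x ^ 2) := by
  unfold gaussianPDFReal
  push_cast
  rw [mul_one, show (-(x - 0) ^ 2 / (2 * 1) : ℝ) = -(1/2) * x ^ 2 by ring]

lemma integral_gaussianReal_eq (g : ℝ → ℝ) :
    ∫ x, g x ∂(gaussianReal 0 1) = ∫ x, gaussianPDFReal 0 1 x * g x := by
  rw [gaussianReal_of_var_ne_zero 0 one_ne_zero]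
  have h : gaussianPDF 0 1 = fun x => ((gaussianPDFReal 0 1 x).toNNReal : ℝ≥0∞) := rfl
  have hm : Measurable fun x => (gaussianPDFReal 0 1 x).toNNReal :=
    measurable_real_toNNReal.comp (measurable_gaussianPDFReal 0 1)
  rw [h, integral_withDensity_eq_integral_smul hm g]
  congr 1
  funext x
  simp [NNReal.smul_def, Real.coe_toNNReal _ (gaussianPDFReal_nonneg 0 1 x)]

lemma integrable_gaussianReal_of (g : ℝ → ℝ)
    (h : Integrable (fun x => g x * gaussianPDFReal 0 1 x) volume) :
    Integrable g (gaussianReal 0 1) := by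
  rw [gaussianReal_of_var_ne_zero 0 one_ne_zero,
    integrable_withDensity_iff (measurable_gaussianPDF 0 1)
      (ae_of_all _ fun x => ENNReal.ofReal_lt_top)]
  refine h.congr (ae_of_all _ fun x => ?_)
  simp only [gaussianPDF]
  rw [ENNReal.toReal_ofReal (gaussianPDFReal_nonneg 0 1 x)]

lemma gamma_half (k : ℕ) :
    Real.Gamma ((k : ℝ) + 1/2)
      = Real.sqrt π * (2*k).factorial / (4^k * k.factorial) := by
  induction k with
  | zero => simpa using Real.Gamma_one_half_eq
  | succ n ih =>
    have h : ((n+1 : ℕ) : ℝ) + 1/2 = ((n : ℝ) + 1/2) + 1 := by push_cast; ring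
    rw [h, Real.Gamma_add_one (by positivity), ih]
    have h2 : 2 * (n+1) = (2*n + 1) + 1 := by ring
    rw [h2, Nat.factorial_succ, Nat.factorial_succ, Nat.factorial_succ]
    have h4 : (4:ℝ)^n ≠ 0 := by positivity
    have hf : ((n.factorial : ℝ)) ≠ 0 := by positivity
    push_cast [pow_succ]
    field_simp
    ring

lemma integrable_pow_gauss (n : ℕ) :
    Integrable (fun x : ℝ => x ^ n) (gaussianReal 0 1) := by
  apply integrable_gaussianReal_of
  have h := integrable_rpow_mul_exp_neg_mul_sq (b := 1/2) one_half_pos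
    (s := (n : ℝ)) (lt_of_lt_of_le (by norm_num) (Nat.cast_nonneg n))
  refine (h.const_mul ((Real.sqrt (2 * π))⁻¹)).congr (ae_of_all _ fun x => ?_)
  simp only [pdf_eq, Real.rpow_natCast]
  ring

lemma gauss_moment (k : ℕ) :
    ∫ x, x ^ (2*k) ∂(gaussianReal 0 1)
      = (2*k).factorial / (2^k * k.factorial) := by
  rw [integral_gaussianReal_eq]
  have h1 : ∀ x : ℝ, gaussianPDFReal 0 1 x * x ^ (2*k)
      = (Real.sqrt (2*π))⁻¹ *
        ((fun t : ℝ => t ^ (2*k) * Real.exp (-(1/2) * t ^ 2)) |x|) := by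
    intro x
    have he : Even (2*k) := ⟨k, by ring⟩
    simp only [pdf_eq]
    rw [he.pow_abs, sq_abs]
    ring
  simp_rw [h1]
  rw [integral_const_mul,
    integral_comp_abs (f := fun t : ℝ => t ^ (2*k) * Real.exp (-(1/2) * t ^ 2))]
  have h2 : ∫ x in Ioi (0:ℝ), x ^ (2*k) * Real.exp (-(1/2) * x ^ 2)
      = ∫ x in Ioi (0:ℝ), x ^ ((2*k : ℕ) : ℝ) * Real.exp (-(1/2) * x ^ ((2:ℕ) : ℝ)) := by
    congr 1
    funext x
    rw [Real.rpow_natCast, Real.rpow_natCast]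
  rw [h2, show (((2:ℕ) : ℕ) : ℝ) = (2:ℝ) by norm_num,
    integral_rpow_mul_exp_neg_mul_rpow two_pos
      (lt_of_lt_of_le (by norm_num) (Nat.cast_nonneg (2*k))) one_half_pos,
    show (-(((2*k : ℕ) : ℝ) + 1) / 2) = -((k : ℝ) + 1/2) by push_cast; ring,
    show ((((2*k : ℕ) : ℝ)) + 1) / 2 = (k : ℝ) + 1/2 by push_cast; ring,
    gamma_half]
  have hb : ((1:ℝ)/2) ^ (-((k : ℝ) + 1/2)) = 2 ^ (k:ℕ) * Real.sqrt 2 := by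
    rw [show ((1:ℝ)/2) = 2⁻¹ by norm_num, Real.inv_rpow (by norm_num),
      ← Real.rpow_neg (by norm_num), neg_neg,
      Real.rpow_add (by norm_num : (0:ℝ) < 2), Real.rpow_natCast]
    congr 1
    rw [Real.sqrt_eq_rpow]
    norm_num
  rw [hb]
  have hsq : Real.sqrt (2*π) = Real.sqrt 2 * Real.sqrt π :=
    Real.sqrt_mul (by norm_num) π
  have h4 : (4:ℝ)^k = 2^k * 2^k := by rw [← mul_pow]; norm_num
  have hs2 : (0:ℝ) < Real.sqrt 2 := Real.sqrt_pos.mpr (by norm_num)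
  have hsp : (0:ℝ) < Real.sqrt π := Real.sqrt_pos.mpr pi_pos
  have h2k : (0:ℝ) < 2^k := by positivity
  have hfk : (0:ℝ) < (k.factorial : ℝ) := by positivity
  rw [hsq, h4]
  field_simp


lemma integrable_pow_fst (n : ℕ) :
    Integrable (fun z : ℝ × ℝ => z.1 ^ n)
      ((gaussianReal 0 1).prod (gaussianReal 0 1)) := by
  have h1 : Integrable (fun _ : ℝ => (1:ℝ)) (gaussianReal 0 1) := integrable_const 1
  have h := (integrable_pow_gauss n).mul_prod h1
  simpa using h

lemma integrable_pow_snd (n : ℕ) :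
    Integrable (fun z : ℝ × ℝ => z.2 ^ n)
      ((gaussianReal 0 1).prod (gaussianReal 0 1)) := by
  have h1 : Integrable (fun _ : ℝ => (1:ℝ)) (gaussianReal 0 1) := integrable_const 1
  have h := h1.mul_prod (integrable_pow_gauss n)
  simpa using h

lemma integral_pow_sum (n : ℕ) :
    ∫ z : ℝ × ℝ, (z.1 ^ n + z.2 ^ n)
        ∂((gaussianReal 0 1).prod (gaussianReal 0 1))
      = 2 * ∫ x, x ^ n ∂(gaussianReal 0 1) := by
  rw [integral_add (integrable_pow_fst n) (integrable_pow_snd n),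
    integral_fun_fst (f := fun x : ℝ => x ^ n),
    integral_fun_snd (f := fun x : ℝ => x ^ n)]
  simp [measure_univ]
  ring

lemma fact_bound (q : ℕ) : ((2*q).factorial : ℝ) ≤ 4^q * (q.factorial : ℝ)^2 := by
  induction q with
  | zero => norm_num
  | succ n ih =>
    have h2 : 2 * (n+1) = (2*n + 1) + 1 := by ring
    rw [h2, Nat.factorial_succ, Nat.factorial_succ, Nat.factorial_succ]
    push_cast [pow_succ]
    have hn : (0:ℝ) ≤ (n:ℝ) := Nat.cast_nonneg n
    have hf : (0:ℝ) ≤ ((2*n).factorial : ℝ) := Nat.cast_nonneg _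
    have hf2 : (0:ℝ) ≤ (n.factorial : ℝ) := Nat.cast_nonneg _
    nlinarith [ih, mul_nonneg hn hf, mul_nonneg (mul_nonneg hn hn) hf,
      sq_nonneg ((n:ℝ) * (n.factorial : ℝ))]

lemma key_bound (σ a : ℝ) (hσ : 0 < σ) (ha : 0 < a) (q : ℕ) (hq : 1 ≤ q) :
    (∫ z : ℝ × ℝ,
        |a ^ 2 / (2 * (σ ^ 2 + a ^ 2)) * (z.2 ^ 2 - z.1 ^ 2)
          + σ * a / (σ ^ 2 + a ^ 2) * (z.1 * z.2)| ^ q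
        ∂((gaussianReal 0 1).prod (gaussianReal 0 1)))
      ≤ (a * (σ + a) / (σ ^ 2 + a ^ 2)) ^ q
          * ((2*q).factorial / (2^q * (q.factorial : ℝ))) := by
  have hs : (0:ℝ) < σ^2 + a^2 := by positivity
  have h2s : (0:ℝ) < 2 * (σ^2 + a^2) := by positivity
  set c : ℝ := a * (σ + a) / (σ^2 + a^2) with hc
  have hcpos : 0 < c := by positivity
  -- pointwise bound on |W|
  have hW : ∀ z : ℝ × ℝ,
      |a ^ 2 / (2 * (σ ^ 2 + a ^ 2)) * (z.2 ^ 2 - z.1 ^ 2)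
        + σ * a / (σ ^ 2 + a ^ 2) * (z.1 * z.2)|
      ≤ c / 2 * (z.1 ^ 2 + z.2 ^ 2) := by
    intro z
    have e1 : a ^ 2 / (2 * (σ ^ 2 + a ^ 2)) * (z.2 ^ 2 - z.1 ^ 2)
        + σ * a / (σ ^ 2 + a ^ 2) * (z.1 * z.2)
        = (a^2 * (z.2^2 - z.1^2) + 2*(σ*a)*(z.1*z.2)) / (2*(σ^2 + a^2)) := by
      field_simp
    have e2 : c / 2 * (z.1 ^ 2 + z.2 ^ 2)
        = (a*(σ+a)*(z.1^2 + z.2^2)) / (2*(σ^2 + a^2)) := by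
      rw [hc, div_div, div_mul_eq_mul_div, mul_comm (σ^2+a^2) 2]
    rw [e1, e2, abs_div, abs_of_pos h2s, div_le_div_iff₀ h2s h2s]
    have hnum : |a^2 * (z.2^2 - z.1^2) + 2*(σ*a)*(z.1*z.2)|
        ≤ a*(σ+a)*(z.1^2 + z.2^2) := by
      rw [abs_le]
      constructor
      · nlinarith [mul_nonneg (mul_nonneg ha.le hσ.le) (sq_nonneg (z.1 + z.2)),
          mul_nonneg (mul_nonneg ha.le ha.le) (sq_nonneg z.2)]
      · nlinarith [mul_nonneg (mul_nonneg ha.le hσ.le) (sq_nonneg (z.1 - z.2)),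
          mul_nonneg (mul_nonneg ha.le ha.le) (sq_nonneg z.1)]
    exact mul_le_mul_of_nonneg_right hnum h2s.le
  -- pointwise bound on |W|^q
  have hpoint : ∀ z : ℝ × ℝ,
      |a ^ 2 / (2 * (σ ^ 2 + a ^ 2)) * (z.2 ^ 2 - z.1 ^ 2)
        + σ * a / (σ ^ 2 + a ^ 2) * (z.1 * z.2)| ^ q
      ≤ (c/2)^q * 2^(q-1) * (z.1 ^ (2*q) + z.2 ^ (2*q)) := by
    intro z
    have h2 : |a ^ 2 / (2 * (σ ^ 2 + a ^ 2)) * (z.2 ^ 2 - z.1 ^ 2)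
        + σ * a / (σ ^ 2 + a ^ 2) * (z.1 * z.2)| ^ q
        ≤ (c/2 * (z.1^2 + z.2^2))^q :=
      pow_le_pow_left₀ (abs_nonneg _) (hW z) q
    have h3 : (z.1^2 + z.2^2)^q ≤ 2^(q-1) * ((z.1^2)^q + (z.2^2)^q) :=
      add_pow_le (sq_nonneg _) (sq_nonneg _) q
    calc |a ^ 2 / (2 * (σ ^ 2 + a ^ 2)) * (z.2 ^ 2 - z.1 ^ 2)
          + σ * a / (σ ^ 2 + a ^ 2) * (z.1 * z.2)| ^ q
        ≤ (c/2 * (z.1^2 + z.2^2))^q := h2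
      _ = (c/2)^q * (z.1^2 + z.2^2)^q := mul_pow _ _ _
      _ ≤ (c/2)^q * (2^(q-1) * ((z.1^2)^q + (z.2^2)^q)) :=
          mul_le_mul_of_nonneg_left h3 (by positivity)
      _ = (c/2)^q * 2^(q-1) * (z.1 ^ (2*q) + z.2 ^ (2*q)) := by
          rw [← pow_mul, ← pow_mul]
          ring_nf
  have hint : Integrable
      (fun z : ℝ × ℝ => (c/2)^q * 2^(q-1) * (z.1 ^ (2*q) + z.2 ^ (2*q)))
      ((gaussianReal 0 1).prod (gaussianReal 0 1)) :=
    ((integrable_pow_fst (2*q)).add (integrable_pow_snd (2*q))).const_mul _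
  calc (∫ z : ℝ × ℝ,
        |a ^ 2 / (2 * (σ ^ 2 + a ^ 2)) * (z.2 ^ 2 - z.1 ^ 2)
          + σ * a / (σ ^ 2 + a ^ 2) * (z.1 * z.2)| ^ q
        ∂((gaussianReal 0 1).prod (gaussianReal 0 1)))
      ≤ ∫ z : ℝ × ℝ, (c/2)^q * 2^(q-1) * (z.1 ^ (2*q) + z.2 ^ (2*q))
        ∂((gaussianReal 0 1).prod (gaussianReal 0 1)) :=
      integral_mono_of_nonneg
        (ae_of_all _ fun z => pow_nonneg (abs_nonneg _) q)
        hint (ae_of_all _ hpoint)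
    _ = (c/2)^q * 2^(q-1) * (2 * ((2*q).factorial / (2^q * (q.factorial : ℝ)))) := by
        rw [integral_const_mul, integral_pow_sum, gauss_moment]
    _ = c ^ q / 2 ^ q * (2^(q-1) * 2)
          * ((2*q).factorial / (2^q * (q.factorial : ℝ))) := by
        rw [div_pow]
        ring
    _ = c ^ q * ((2*q).factorial / (2^q * (q.factorial : ℝ))) := by
        have h2q : ((2:ℝ))^(q-1) * 2 = 2^q := by
          rw [← pow_succ]
          congr 1
          omega
        have hne : ((2:ℝ))^q ≠ 0 := by positivity
        rw [h2q, div_mul_cancel₀ _ hne]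
  
end InfoDensityAux

open InfoDensityAux in
theorem info_density_moment_bounds (σ a : ℝ) (hσ : 0 < σ) (ha : 0 < a) :
    (∫ z : ℝ × ℝ,
        (a ^ 2 / (2 * (σ ^ 2 + a ^ 2)) * (z.2 ^ 2 - z.1 ^ 2)
          + σ * a / (σ ^ 2 + a ^ 2) * (z.1 * z.2)) ^ 2
        ∂((gaussianReal 0 1).prod (gaussianReal 0 1)))
      ≤ 6 * (a * (σ + a) / (σ ^ 2 + a ^ 2)) ^ 2 ∧
    ∀ q : ℕ, 2 ≤ q →
      (∫ z : ℝ × ℝ,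
          |a ^ 2 / (2 * (σ ^ 2 + a ^ 2)) * (z.2 ^ 2 - z.1 ^ 2)
            + σ * a / (σ ^ 2 + a ^ 2) * (z.1 * z.2)| ^ q
          ∂((gaussianReal 0 1).prod (gaussianReal 0 1)))
        ≤ 2 * (2 * (a * (σ + a) / (σ ^ 2 + a ^ 2))) ^ q * (q.factorial : ℝ) := by
  have hs : (0:ℝ) < σ^2 + a^2 := by positivity
  have hcpos : (0:ℝ) < a * (σ + a) / (σ ^ 2 + a ^ 2) := by positivity
  constructor
  · have h1 : (∫ z : ℝ × ℝ,
        (a ^ 2 / (2 * (σ ^ 2 + a ^ 2)) * (z.2 ^ 2 - z.1 ^ 2)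
          + σ * a / (σ ^ 2 + a ^ 2) * (z.1 * z.2)) ^ 2
        ∂((gaussianReal 0 1).prod (gaussianReal 0 1)))
        = ∫ z : ℝ × ℝ,
        |a ^ 2 / (2 * (σ ^ 2 + a ^ 2)) * (z.2 ^ 2 - z.1 ^ 2)
          + σ * a / (σ ^ 2 + a ^ 2) * (z.1 * z.2)| ^ 2
        ∂((gaussianReal 0 1).prod (gaussianReal 0 1)) :=
      integral_congr_ae (ae_of_all _ fun z => (sq_abs _).symm)
    rw [h1]
    refine (key_bound σ a hσ ha 2 one_le_two).trans ?_
    have h3 : ((2*2).factorial : ℝ) / (2^2 * ((2:ℕ).factorial : ℝ)) = 3 := by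
      norm_num [Nat.factorial]
    rw [h3]
    nlinarith [sq_nonneg (a * (σ + a) / (σ ^ 2 + a ^ 2))]
  · intro q hq
    refine (key_bound σ a hσ ha q (le_trans one_le_two hq)).trans ?_
    have hfb := fact_bound q
    have hp : (0:ℝ) < 2^q := by positivity
    have hfq : (0:ℝ) < (q.factorial : ℝ) := by positivity
    have h4 : (4:ℝ)^q = 2^q * 2^q := by rw [← mul_pow]; norm_num
    have hd : ((2*q).factorial : ℝ) / (2^q * (q.factorial : ℝ))
        ≤ 2 * 2^q * (q.factorial : ℝ) := by
      rw [div_le_iff₀ (by positivity)]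
      nlinarith [hfb, mul_pos hp hfq]
    calc (a * (σ + a) / (σ ^ 2 + a ^ 2)) ^ q
          * (((2*q).factorial : ℝ) / (2^q * (q.factorial : ℝ)))
        ≤ (a * (σ + a) / (σ ^ 2 + a ^ 2)) ^ q * (2 * 2^q * (q.factorial : ℝ)) :=
          mul_le_mul_of_nonneg_left hd (by positivity)
      _ = 2 * (2 * (a * (σ + a) / (σ ^ 2 + a ^ 2))) ^ q * (q.factorial : ℝ) := by
          rw [mul_pow]
          ring
end

section
/- (Proposition 1, reduced form.) Let σ > 0, a > 0, n ≥ 1, and δ > 0. Let (Z₁ᵢ, Z₂ᵢ)_{i=1,…,n} be i.i.d. pairs of independent standard normal random variables and set Wᵢ := (a²/(2(σ² + a²))) · (Z₂ᵢ² − Z₁ᵢ²) + (σa/(σ² + a²)) · Z₁ᵢZ₂ᵢ and α := 2a(σ + a)/(σ² + a²). Then P[ | Σ_{i=1}^n Wᵢ | ≥ nδ ] ≤ 2 · exp( − δ²n / ( 2(4α² + δα) ) ). -/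
/-!
Each summand `Wᵢ` is a traceless quadratic form in a standard Gaussian pair, with eigenvalues
`±λ`, `4λ² = a² / (σ² + a²) ≤ α² / 4`; integrating out one coordinate at a time gives its moment
generating function `(1 - 4λ²t²)^(-1/2)`. The Chernoff bound on both tails, together with
independence across `i`, bounds the probability by `2 (e^(-tδ) (1 - 4λ²t²)^(-1/2))ⁿ`. For
`t = δ / (α (4α + δ))` one has `e^(-tδ) ≤ 1 / (1 + tδ) ≤ 1 - 4λ²t²`, so the bracket is at most
`e^(-tδ/2)`, which is the claimed exponent.
-/

open MeasureTheory ProbabilityTheory Real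
open scoped NNReal

lemma integrable_gaussianReal_iff {E : Type*} [NormedAddCommGroup E] [NormedSpace ℝ E]
    {μ : ℝ} {v : ℝ≥0} (hv : v ≠ 0) {f : ℝ → E} :
    Integrable f (gaussianReal μ v) ↔ Integrable (fun x => gaussianPDFReal μ v x • f x) := by
  rw [gaussianReal_of_var_ne_zero _ hv, integrable_withDensity_iff_integrable_smul'
    (measurable_gaussianPDF μ v) (ae_of_all _ fun _ => gaussianPDF_lt_top)]
  simp [gaussianPDF, ENNReal.toReal_ofReal (gaussianPDFReal_nonneg μ v _)]

lemma gaussianPDFReal_mul_exp_quadratic {s : ℝ} (hs : s ≠ 1 / 2) (r y : ℝ) :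
    gaussianPDFReal 0 1 y * exp (s * y ^ 2 + r * y)
      = (√(2 * π))⁻¹ * exp (r ^ 2 / (2 * (1 - 2 * s)))
        * exp (-(1 / 2 - s) * (y - r / (1 - 2 * s)) ^ 2) := by
  have hs' : 1 - 2 * s ≠ 0 := fun h => hs (by linarith)
  simp only [gaussianPDFReal, mul_assoc, ← exp_add]
  push_cast
  rw [mul_one]
  congr 2
  field_simp
  ring

lemma integrable_exp_quadratic_gaussianReal {s : ℝ} (hs : s < 1 / 2) (r : ℝ) :
    Integrable (fun y => exp (s * y ^ 2 + r * y)) (gaussianReal 0 1) := by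
  rw [integrable_gaussianReal_iff one_ne_zero]
  simp_rw [smul_eq_mul, gaussianPDFReal_mul_exp_quadratic hs.ne]
  exact ((integrable_exp_neg_mul_sq (by linarith)).comp_sub_right _).const_mul _

lemma integral_exp_quadratic_gaussianReal {s : ℝ} (hs : s < 1 / 2) (r : ℝ) :
    ∫ y, exp (s * y ^ 2 + r * y) ∂(gaussianReal 0 1)
      = (√(1 - 2 * s))⁻¹ * exp (r ^ 2 / (2 * (1 - 2 * s))) := by
  have hb : 0 < 1 / 2 - s := by linarith
  have hsqrt : (√(2 * π))⁻¹ * √(π / (1 / 2 - s)) = (√(1 - 2 * s))⁻¹ := by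
    rw [← sqrt_inv, ← sqrt_mul (by positivity), ← sqrt_inv]
    congr 1
    field_simp [pi_ne_zero]
  rw [integral_gaussianReal_eq_integral_smul one_ne_zero]
  simp_rw [smul_eq_mul, gaussianPDFReal_mul_exp_quadratic hs.ne]
  rw [integral_const_mul, integral_sub_right_eq_self (fun y => exp (-(1 / 2 - s) * y ^ 2)),
    integral_gaussian, ← hsqrt]
  ring

def tracelessQuadForm (c d : ℝ) (p : ℝ × ℝ) : ℝ := c * (p.2 ^ 2 - p.1 ^ 2) + d * (p.1 * p.2)

section TracelessQuadForm

variable {c d t : ℝ}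

lemma mul_lt_half_of_sq_mul_lt_one (h : t ^ 2 * (4 * c ^ 2 + d ^ 2) < 1) : t * c < 1 / 2 := by
  nlinarith [sq_nonneg (t * d), sq_nonneg (2 * (t * c) - 1)]

lemma exp_mul_tracelessQuadForm_eq (x y : ℝ) :
    exp (t * tracelessQuadForm c d (x, y))
      = exp (-(t * c) * x ^ 2) * exp (t * c * y ^ 2 + t * d * x * y) := by
  rw [← exp_add, tracelessQuadForm]
  ring_nf

lemma integrable_exp_mul_tracelessQuadForm_slice (htc : t * c < 1 / 2) (x : ℝ) :
    Integrable (fun y => exp (t * tracelessQuadForm c d (x, y))) (gaussianReal 0 1) := by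
  simp_rw [exp_mul_tracelessQuadForm_eq]
  exact (integrable_exp_quadratic_gaussianReal htc _).const_mul _

lemma integral_exp_mul_tracelessQuadForm_slice (htc : t * c < 1 / 2) (x : ℝ) :
    ∫ y, exp (t * tracelessQuadForm c d (x, y)) ∂(gaussianReal 0 1)
      = (√(1 - 2 * (t * c)))⁻¹
        * exp ((t ^ 2 * d ^ 2 / (2 * (1 - 2 * (t * c))) - t * c) * x ^ 2) := by
  have hκ : 1 - 2 * (t * c) ≠ 0 := by linarith
  simp_rw [exp_mul_tracelessQuadForm_eq]
  rw [integral_const_mul, integral_exp_quadratic_gaussianReal htc, mul_left_comm, ← exp_add]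
  congr 2
  field_simp
  ring

lemma mgf_tracelessQuadForm (h : t ^ 2 * (4 * c ^ 2 + d ^ 2) < 1) :
    Integrable (fun p => exp (t * tracelessQuadForm c d p))
        ((gaussianReal 0 1).prod (gaussianReal 0 1)) ∧
      mgf (tracelessQuadForm c d) ((gaussianReal 0 1).prod (gaussianReal 0 1)) t
        = (√(1 - t ^ 2 * (4 * c ^ 2 + d ^ 2)))⁻¹ := by
  have htc := mul_lt_half_of_sq_mul_lt_one h
  set κ := 1 - 2 * (t * c)
  have hκ : 0 < κ := by linarith
  set s := t ^ 2 * d ^ 2 / (2 * κ) - t * c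
  have hs_eq : (1 - 2 * s) * κ = 1 - t ^ 2 * (4 * c ^ 2 + d ^ 2) := by
    simp only [s]; field_simp; ring
  have hs : s < 1 / 2 := by nlinarith
  have hslice (x : ℝ) := integral_exp_mul_tracelessQuadForm_slice (d := d) htc x
  have hgauss_int := integrable_exp_quadratic_gaussianReal hs 0
  have hgauss := integral_exp_quadratic_gaussianReal hs 0
  simp only [zero_mul, add_zero] at hgauss_int hgauss
  have hint : Integrable (fun p => exp (t * tracelessQuadForm c d p))
      ((gaussianReal 0 1).prod (gaussianReal 0 1)) := by
    refine (integrable_prod_iff (by unfold tracelessQuadForm; fun_prop)).2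
      ⟨ae_of_all _ (integrable_exp_mul_tracelessQuadForm_slice htc), ?_⟩
    simp_rw [norm_of_nonneg (exp_pos _).le, hslice]
    exact hgauss_int.const_mul _
  refine ⟨hint, ?_⟩
  rw [mgf, integral_prod _ hint]
  simp_rw [hslice]
  rw [integral_const_mul, hgauss, ← hs_eq, sqrt_mul (by linarith), mul_inv]
  simp [κ, mul_comm]

end TracelessQuadForm

section IidSum

variable {ι E : Type*} [Fintype ι] [MeasurableSpace E] {ν : Measure E} [SigmaFinite ν]
  {f : E → ℝ} {t : ℝ}

lemma integrable_exp_mul_sum_pi (h : Integrable (fun x => exp (t * f x)) ν) :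
    Integrable (fun ω : ι → E => exp (t * ∑ i, f (ω i))) (Measure.pi fun _ => ν) := by
  simp_rw [Finset.mul_sum, exp_sum]
  exact Integrable.fintype_prod fun _ => h

lemma mgf_sum_pi :
    mgf (fun ω : ι → E => ∑ i, f (ω i)) (Measure.pi fun _ => ν) t
      = mgf f ν t ^ Fintype.card ι := by
  simp_rw [mgf, Finset.mul_sum, exp_sum]
  exact integral_fintype_prod_eq_pow (μ := ν) (fun x => exp (t * f x))

end IidSum

theorem measure_le_abs_le_exp_mul_mgf {Ω : Type*} [MeasurableSpace Ω] {μ : Measure Ω}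
    [IsFiniteMeasure μ] {X : Ω → ℝ} (ε : ℝ) {t : ℝ} (ht : 0 ≤ t)
    (h_int : Integrable (fun ω => exp (t * X ω)) μ)
    (h_int_neg : Integrable (fun ω => exp (-t * X ω)) μ) :
    μ.real {ω | ε ≤ |X ω|} ≤ exp (-t * ε) * (mgf X μ t + mgf X μ (-t)) := by
  have hsub : {ω | ε ≤ |X ω|} ⊆ {ω | ε ≤ X ω} ∪ {ω | X ω ≤ -ε} := fun _ hω =>
    (le_abs'.1 (Set.mem_ofPred.1 hω)).symm
  have hlower := measure_le_le_exp_mul_mgf (-ε) (neg_nonpos.2 ht) h_int_neg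
  rw [neg_neg, mul_neg, ← neg_mul] at hlower
  calc μ.real {ω | ε ≤ |X ω|} ≤ μ.real {ω | ε ≤ X ω} + μ.real {ω | X ω ≤ -ε} :=
        (measureReal_mono hsub).trans (measureReal_union_le _ _)
    _ ≤ exp (-t * ε) * mgf X μ t + exp (-t * ε) * mgf X μ (-t) :=
        add_le_add (measure_ge_le_exp_mul_mgf ε ht h_int) hlower
    _ = exp (-t * ε) * (mgf X μ t + mgf X μ (-t)) := by ring

lemma exp_neg_mul_inv_sqrt_le {x q : ℝ} (h : exp (-x) ≤ q) :
    exp (-x) * (√q)⁻¹ ≤ exp (-(x / 2)) := by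
  have hsqrt : exp (-(x / 2)) ≤ √q := by
    rw [le_sqrt' (exp_pos _), ← exp_nat_mul]
    convert h using 2
    ring
  calc exp (-x) * (√q)⁻¹ ≤ exp (-x) * (exp (-(x / 2)))⁻¹ := by gcongr
    _ = exp (-(x / 2)) := by rw [← exp_neg, ← exp_add]; ring_nf

lemma exp_neg_mul_le_one_sub_sq_mul {α δ m t : ℝ} (hα : 0 < α) (hδ : 0 < δ)
    (hm : m ≤ α ^ 2 / 4) (ht : t * (α * (4 * α + δ)) = δ) :
    exp (-(t * δ)) ≤ 1 - t ^ 2 * m := by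
  have ht_pos : 0 < t := pos_of_mul_pos_left (ht ▸ hδ) (by positivity)
  have htα : t * α < 1 := by nlinarith
  -- `t δ = 4 t² α² + t² α δ` by the choice of `t`
  have hkey : 1 ≤ (1 - t ^ 2 * m) * (1 + t * δ) := by
    nlinarith [mul_le_mul_of_nonneg_left hm (by positivity : (0 : ℝ) ≤ t ^ 2 * (1 + t * δ)),
      mul_le_mul_of_nonneg_left htα.le (by positivity : (0 : ℝ) ≤ t ^ 2 * α * δ)]
  calc exp (-(t * δ)) ≤ (1 + t * δ)⁻¹ := by
        rw [exp_neg]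
        exact inv_anti₀ (by positivity) (by linarith [add_one_le_exp (t * δ)])
    _ ≤ 1 - t ^ 2 * m := by rwa [inv_le_iff_one_le_mul₀ (by positivity)]

theorem info_density_concentration_general (σ a : ℝ) (hσ : 0 < σ) (ha : 0 < a)
    (n : ℕ) (δ : ℝ) (hδ : 0 < δ) :
    ((Measure.pi fun _ : Fin n => (gaussianReal 0 1).prod (gaussianReal 0 1))
        {ω : Fin n → ℝ × ℝ |
          (n : ℝ) * δ ≤
            |∑ i, (a ^ 2 / (2 * (σ ^ 2 + a ^ 2)) * ((ω i).2 ^ 2 - (ω i).1 ^ 2)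
              + σ * a / (σ ^ 2 + a ^ 2) * ((ω i).1 * (ω i).2))|}).toReal
      ≤ 2 * Real.exp (-(δ ^ 2 * n) /
          (2 * (4 * (2 * a * (σ + a) / (σ ^ 2 + a ^ 2)) ^ 2
            + δ * (2 * a * (σ + a) / (σ ^ 2 + a ^ 2))))) := by
  set c := a ^ 2 / (2 * (σ ^ 2 + a ^ 2))
  set d := σ * a / (σ ^ 2 + a ^ 2)
  set α := 2 * a * (σ + a) / (σ ^ 2 + a ^ 2)
  have hα : 0 < α := by positivity
  have hm : 4 * c ^ 2 + d ^ 2 ≤ α ^ 2 / 4 := by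
    have hgap : α ^ 2 / 4 - (4 * c ^ 2 + d ^ 2) = 2 * σ * a ^ 3 / (σ ^ 2 + a ^ 2) ^ 2 := by
      simp only [c, d, α]; field_simp; ring
    have : 0 ≤ 2 * σ * a ^ 3 / (σ ^ 2 + a ^ 2) ^ 2 := by positivity
    linarith
  set t := δ / (α * (4 * α + δ))
  have ht : t * (α * (4 * α + δ)) = δ := div_mul_cancel₀ _ (by positivity)
  have hexp := exp_neg_mul_le_one_sub_sq_mul hα hδ hm ht
  have hQ : t ^ 2 * (4 * c ^ 2 + d ^ 2) < 1 := by linarith [exp_pos (-(t * δ))]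
  obtain ⟨hint, hmgf⟩ := mgf_tracelessQuadForm hQ
  obtain ⟨hint_neg, hmgf_neg⟩ :=
    mgf_tracelessQuadForm (c := c) (d := d) (t := -t) (by rwa [neg_sq])
  rw [neg_sq] at hmgf_neg
  refine (measure_le_abs_le_exp_mul_mgf (X := fun ω : Fin n → ℝ × ℝ =>
    ∑ i, tracelessQuadForm c d (ω i)) _ (by positivity)
    (integrable_exp_mul_sum_pi hint) (integrable_exp_mul_sum_pi hint_neg)).trans ?_
  calc _ = 2 * (exp (-(t * δ)) * (√(1 - t ^ 2 * (4 * c ^ 2 + d ^ 2)))⁻¹) ^ n := by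
        rw [mgf_sum_pi, mgf_sum_pi, hmgf, hmgf_neg, Fintype.card_fin, mul_pow, ← exp_nat_mul]
        ring_nf
    _ ≤ 2 * exp (-(t * δ / 2)) ^ n := by
        gcongr
        exact exp_neg_mul_inv_sqrt_le hexp
    _ = _ := by
        rw [← exp_nat_mul]
        congr 1
        simp only [t]
        field_simp

theorem info_density_concentration (σ a : ℝ) (hσ : 0 < σ) (ha : 0 < a)
    (n : ℕ) (hn : 1 ≤ n) (δ : ℝ) (hδ : 0 < δ) :
    ((Measure.pi fun _ : Fin n => (gaussianReal 0 1).prod (gaussianReal 0 1))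
        {ω : Fin n → ℝ × ℝ |
          (n : ℝ) * δ ≤
            |∑ i, (a ^ 2 / (2 * (σ ^ 2 + a ^ 2)) * ((ω i).2 ^ 2 - (ω i).1 ^ 2)
              + σ * a / (σ ^ 2 + a ^ 2) * ((ω i).1 * (ω i).2))|}).toReal
      ≤ 2 * Real.exp (-(δ ^ 2 * n) /
          (2 * (4 * (2 * a * (σ + a) / (σ ^ 2 + a ^ 2)) ^ 2
            + δ * (2 * a * (σ + a) / (σ ^ 2 + a ^ 2))))) :=
  info_density_concentration_general σ a hσ ha n δ hδ
end

section
/- Let n ≥ 1 and k ≥ 1 be integers, let c ≥ 0 be a real, and let X be a random n×k matrix whose entries are i.i.d. standard normal N(0,1). Then E[ log det( I_k + c · Xᵀ X ) ] ≤ k · log( 1 + c·n ), where I_k is the k×k identity matrix. -/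
/-!
Since `log` is concave, `log x ≤ log b + (x - b) / b` for all `x, b > 0`. Applied to the
eigenvalues of the positive definite matrix `M = I + c XᵀX` and summed, this gives
`log det M ≤ k log b + (tr M - k b) / b`, whose right-hand side is affine in `tr M`.
Taking expectations with `b = 1 + c n` and `E[tr M] = k + c n k = k b` leaves `k log b`.
-/

open MeasureTheory ProbabilityTheory Matrix

theorem Real.log_le_log_add_sub_div {x b : ℝ} (hx : 0 < x) (hb : 0 < b) :
    Real.log x ≤ Real.log b + (x - b) / b := by
  have := Real.log_le_sub_one_of_pos (div_pos hx hb)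
  rw [Real.log_div hx.ne' hb.ne', div_sub_one hb.ne'] at this
  linarith

namespace Matrix

variable {m n : Type*} [Fintype m] [Fintype n]

theorem PosDef.log_det_le [DecidableEq m] {M : Matrix m m ℝ} (hM : M.PosDef) {b : ℝ}
    (hb : 0 < b) :
    Real.log M.det ≤ Fintype.card m * Real.log b + (M.trace - Fintype.card m * b) / b := by
  have hpos := hM.eigenvalues_pos
  rw [hM.isHermitian.det_eq_prod_eigenvalues, hM.isHermitian.trace_eq_sum_eigenvalues]
  simp only [RCLike.ofReal_real_eq_id, id]
  rw [Real.log_prod fun i _ => (hpos i).ne']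
  calc ∑ i, Real.log (hM.isHermitian.eigenvalues i)
      ≤ ∑ i, (Real.log b + (hM.isHermitian.eigenvalues i - b) / b) :=
        Finset.sum_le_sum fun i _ => Real.log_le_log_add_sub_div (hpos i) hb
    _ = _ := by
        rw [Finset.sum_add_distrib, ← Finset.sum_div, Finset.sum_sub_distrib]
        simp

theorem posDef_one_add_smul_transpose_mul_self [DecidableEq n] {c : ℝ} (hc : 0 ≤ c)
    (A : Matrix m n ℝ) : (1 + c • (Aᵀ * A)).PosDef :=
  PosDef.one.add_posSemidef ((posSemidef_conjTranspose_mul_self A).smul hc)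

theorem trace_one_add_smul_transpose_mul_self [DecidableEq n] {R : Type*} [CommRing R] (c : R)
    (A : Matrix m n R) :
    (1 + c • (Aᵀ * A)).trace = Fintype.card n + c * ∑ i, ∑ j, A i j ^ 2 := by
  rw [trace_add, trace_one, trace_smul, smul_eq_mul, trace, Finset.sum_comm]
  simp [mul_apply, sq]

end Matrix

theorem integral_log_det_le_card_mul_log {Ω m : Type*} [MeasurableSpace Ω] [Fintype m]
    [DecidableEq m] {μ : Measure Ω} [IsProbabilityMeasure μ] {M : Ω → Matrix m m ℝ}
    (hM : ∀ ω, (M ω).PosDef)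
    (htr : Integrable (fun ω => (M ω).trace) μ) {b : ℝ} (hb : 1 ≤ b)
    (hmean : ∫ ω, (M ω).trace ∂μ = Fintype.card m * b) :
    ∫ ω, Real.log (M ω).det ∂μ ≤ Fintype.card m * Real.log b := by
  have hlog_b : 0 ≤ Fintype.card m * Real.log b := by
    have := Real.log_nonneg hb
    positivity
  by_cases hf : Integrable (fun ω => Real.log (M ω).det) μ
  · have hdev : Integrable (fun ω => ((M ω).trace - Fintype.card m * b) / b) μ :=
      (htr.sub (integrable_const _)).div_const b
    calc ∫ ω, Real.log (M ω).det ∂μ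
        ≤ ∫ ω, Fintype.card m * Real.log b + ((M ω).trace - Fintype.card m * b) / b ∂μ :=
          integral_mono hf ((integrable_const _).add hdev)
            fun ω => (hM ω).log_det_le (by linarith)
      _ = Fintype.card m * Real.log b := by
          rw [integral_add (integrable_const _) hdev, integral_div,
            integral_sub htr (integrable_const _), hmean]
          simp
  -- the Bochner integral of a non-integrable function is `0`
  · rwa [integral_undef hf]

theorem integral_sq_gaussianReal_zero (v : NNReal) : ∫ x, x ^ 2 ∂gaussianReal 0 v = v := by
  rw [← variance_id_gaussianReal (μ := 0),
    variance_of_integral_eq_zero aemeasurable_id integral_id_gaussianReal]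
  rfl

section PiPi

variable {ι κ α E : Type*} [Fintype ι] [Fintype κ] [MeasurableSpace α] {ν : Measure α}
  [IsProbabilityMeasure ν] [NormedAddCommGroup E] {f : α → E}

theorem integrable_comp_eval_eval (hf : Integrable f ν) (i : ι) (j : κ) :
    Integrable (fun ω : ι → κ → α => f (ω i j)) (Measure.pi fun _ => Measure.pi fun _ => ν) :=
  integrable_comp_eval (μ := fun _ => Measure.pi fun _ => ν) (f := fun r => f (r j))
    (integrable_comp_eval hf)

theorem integral_comp_eval_eval [NormedSpace ℝ E] (hf : AEStronglyMeasurable f ν) (i : ι)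
    (j : κ) :
    ∫ ω : ι → κ → α, f (ω i j) ∂(Measure.pi fun _ => Measure.pi fun _ => ν) = ∫ x, f x ∂ν := by
  rw [integral_comp_eval (μ := fun _ => Measure.pi fun _ => ν) (f := fun r => f (r j)),
    integral_comp_eval hf]
  exact hf.comp_measurePreserving (measurePreserving_eval _ j)

variable {ν : Measure ℝ} [IsProbabilityMeasure ν]

theorem integrable_sum_sq_pi_pi (h : Integrable (fun x => x ^ 2) ν) :
    Integrable (fun ω : ι → κ → ℝ => ∑ i, ∑ j, ω i j ^ 2)
      (Measure.pi fun _ => Measure.pi fun _ => ν) :=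
  integrable_finsetSum _ fun i _ => integrable_finsetSum _ fun j _ =>
    integrable_comp_eval_eval h i j

theorem integral_sum_sq_pi_pi (h : Integrable (fun x => x ^ 2) ν) :
    ∫ ω : ι → κ → ℝ, ∑ i, ∑ j, ω i j ^ 2 ∂(Measure.pi fun _ => Measure.pi fun _ => ν)
      = Fintype.card ι * Fintype.card κ * ∫ x, x ^ 2 ∂ν := by
  rw [integral_finsetSum _ fun i _ =>
    integrable_finsetSum _ fun j _ => integrable_comp_eval_eval h i j]
  simp_rw [integral_finsetSum _ fun j _ => integrable_comp_eval_eval h _ j,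
    integral_comp_eval_eval h.aestronglyMeasurable]
  simp [mul_assoc]

end PiPi

theorem expected_log_det_bound_general (n k : ℕ)
    (c : ℝ) (hc : 0 ≤ c) :
    (∫ ω : Fin n → Fin k → ℝ,
        Real.log (Matrix.det (1 + c • ((Matrix.of ω)ᵀ * Matrix.of ω)))
        ∂(Measure.pi fun _ : Fin n => Measure.pi fun _ : Fin k => gaussianReal 0 1))
      ≤ (k : ℝ) * Real.log (1 + c * n) := by
  set μ := Measure.pi fun _ : Fin n => Measure.pi fun _ : Fin k => gaussianReal 0 1
  have htrace (ω : Fin n → Fin k → ℝ) :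
      (1 + c • ((of ω)ᵀ * of ω)).trace = k + c * ∑ i, ∑ j, ω i j ^ 2 := by
    rw [trace_one_add_smul_transpose_mul_self, Fintype.card_fin]
    rfl
  have hsq : Integrable (fun x : ℝ => x ^ 2) (gaussianReal 0 1) :=
    (memLp_id_gaussianReal 2).integrable_sq
  have hsum := (integrable_sum_sq_pi_pi (ι := Fin n) (κ := Fin k) hsq).const_mul c
  have htr_int :
      Integrable (fun ω : Fin n → Fin k → ℝ => (1 + c • ((of ω)ᵀ * of ω)).trace) μ := by
    simp only [htrace]
    exact (integrable_const _).add hsum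
  have htr_mean :
      ∫ ω, (1 + c • ((of ω)ᵀ * of ω)).trace ∂μ = Fintype.card (Fin k) * (1 + c * n) := by
    simp only [htrace]
    rw [integral_add (integrable_const _) hsum, integral_const_mul, integral_sum_sq_pi_pi hsq,
      integral_sq_gaussianReal_zero]
    simp only [integral_const, probReal_univ, smul_eq_mul, one_mul, Fintype.card_fin,
      NNReal.coe_one, mul_one]
    ring
  simpa using integral_log_det_le_card_mul_log
    (fun ω => posDef_one_add_smul_transpose_mul_self hc (of ω)) htr_int
    (le_add_of_nonneg_right (by positivity)) htr_mean

theorem expected_log_det_bound (n k : ℕ) (hn : 1 ≤ n) (hk : 1 ≤ k)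
    (c : ℝ) (hc : 0 ≤ c) :
    (∫ ω : Fin n → Fin k → ℝ,
        Real.log (Matrix.det (1 + c • ((Matrix.of ω)ᵀ * Matrix.of ω)))
        ∂(Measure.pi fun _ : Fin n => Measure.pi fun _ : Fin k => gaussianReal 0 1))
      ≤ (k : ℝ) * Real.log (1 + c * n) :=
  expected_log_det_bound_general n k c hc
end

section
/- (Proposition 3.) Fix s > 0 and α ∈ (0,1], and let (β_i)_{i≥1} be i.i.d. N(0, s²) random variables. Define g(α) := ∫₀^∞ max(α − F(u), 0) du, where F(u) := P[W² ≤ u] for a standard normal W (the chi-squared cdf with one degree of freedom). Then, almost surely, (1/(k·s²)) · min{ Σ_{i∈T} β_i² : T ⊆ {1,…,k}, |T| = ⌊α·k⌋ } → g(α) as k → ∞; that is, the normalized sum of the ⌊αk⌋ smallest values among β₁², …, β_k² converges almost surely to g(α). -/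
/-!
Put `Y i = (β i / s) ^ 2`: these are i.i.d. with the law of `W ^ 2`, whose cdf `F` is the one in
the limit, and let `F_k` be the empirical cdf of `Y 0, …, Y (k - 1)`. By an exchange argument a
minimizing `m`-subset contains exactly `min (#{i < k | Y i ≤ v}) m` indices with `Y i ≤ v`, so
the layer-cake formula gives `(1/k) · (sum of the m smallest) = ∫₀^∞ max (m/k - F_k v, 0) dv`.
By the strong law `F_k → F` at every rational almost surely, hence, by monotonicity, at every
continuity point of `F`. For `α < 1` all the integrands vanish beyond a point `Q` with
`α < F Q`, and dominated convergence on `(0, Q]` concludes; for `α = 1` the minimum is the full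
sum and the strong law applies directly.
-/

open MeasureTheory ProbabilityTheory Filter
open Set Topology
open scoped Finset

section SumSmallest

variable {ι : Type*}

-- Equal to `0` (as `sInf ∅`) when `s.card < m`.
noncomputable def sumSmallest (s : Finset ι) (m : ℕ) (y : ι → ℝ) : ℝ :=
  sInf {x : ℝ | ∃ T : Finset ι, T ⊆ s ∧ T.card = m ∧ x = ∑ i ∈ T, y i}

lemma exists_sumSmallest_eq (y : ι → ℝ) {s : Finset ι} {m : ℕ} (hm : m ≤ s.card) :
    ∃ T ⊆ s, T.card = m ∧ sumSmallest s m y = ∑ i ∈ T, y i ∧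
      ∀ T' ⊆ s, T'.card = m → ∑ i ∈ T, y i ≤ ∑ i ∈ T', y i := by
  obtain ⟨T, hT, hmin⟩ := (s.powersetCard m).exists_min_image (fun T ↦ ∑ i ∈ T, y i)
    (Finset.powersetCard_nonempty.2 hm)
  rw [Finset.mem_powersetCard] at hT
  have hmin' : ∀ T' ⊆ s, T'.card = m → ∑ i ∈ T, y i ≤ ∑ i ∈ T', y i :=
    fun T' hT's hT'm ↦ hmin T' (Finset.mem_powersetCard.2 ⟨hT's, hT'm⟩)
  refine ⟨T, hT.1, hT.2, le_antisymm ?_ ?_, hmin'⟩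
  · exact csInf_le ⟨_, by rintro _ ⟨T', h₁, h₂, rfl⟩; exact hmin' T' h₁ h₂⟩ ⟨T, hT.1, hT.2, rfl⟩
  · exact le_csInf ⟨_, T, hT.1, hT.2, rfl⟩ (by rintro _ ⟨T', h₁, h₂, rfl⟩; exact hmin' T' h₁ h₂)

lemma sumSmallest_card (s : Finset ι) (y : ι → ℝ) : sumSmallest s s.card y = ∑ i ∈ s, y i := by
  obtain ⟨T, hTs, hTcard, hsum, -⟩ := exists_sumSmallest_eq y le_rfl
  rwa [Finset.eq_of_subset_of_card_le hTs hTcard.ge] at hsum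

lemma sumSmallest_const_mul (s : Finset ι) (m : ℕ) (y : ι → ℝ) {c : ℝ} (hc : 0 ≤ c) :
    sumSmallest s m (fun i ↦ c * y i) = c * sumSmallest s m y := by
  rw [sumSmallest, sumSmallest, ← smul_eq_mul, ← Real.sInf_smul_of_nonneg hc]
  congr 1
  ext x
  simp only [Set.mem_smul_set, smul_eq_mul, ← Finset.mul_sum]
  constructor
  · rintro ⟨T, hTs, hTm, rfl⟩; exact ⟨_, ⟨T, hTs, hTm, rfl⟩, rfl⟩
  · rintro ⟨_, ⟨T, hTs, hTm, rfl⟩, rfl⟩; exact ⟨T, hTs, hTm, rfl⟩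

variable {y : ι → ℝ} {s T : Finset ι}

lemma le_of_minimal_sum [DecidableEq ι]
    (hmin : ∀ T' ⊆ s, T'.card = T.card → ∑ i ∈ T, y i ≤ ∑ i ∈ T', y i)
    (hTs : T ⊆ s) {i j : ι} (hi : i ∈ T) (hj : j ∈ s) (hjT : j ∉ T) : y i ≤ y j := by
  have hj' : j ∉ T.erase i := fun h ↦ hjT (Finset.mem_of_mem_erase h)
  have hswap := hmin (insert j (T.erase i))
    (Finset.insert_subset hj ((Finset.erase_subset i T).trans hTs))
    (by rw [Finset.card_insert_of_notMem hj', Finset.card_erase_add_one hi])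
  rw [Finset.sum_insert hj', ← Finset.sum_erase_add T y hi] at hswap
  linarith

lemma card_filter_le_of_minimal_sum [DecidableEq ι]
    (hmin : ∀ T' ⊆ s, T'.card = T.card → ∑ i ∈ T, y i ≤ ∑ i ∈ T', y i) (hTs : T ⊆ s) (v : ℝ) :
    #{i ∈ T | y i ≤ v} = min #{i ∈ s | y i ≤ v} #T := by
  have hsub : {i ∈ T | y i ≤ v} ⊆ {i ∈ s | y i ≤ v} := Finset.filter_subset_filter _ hTs
  by_cases hall : ∀ i ∈ T, y i ≤ v
  · rw [Finset.filter_true_of_mem hall] at hsub ⊢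
    exact (min_eq_right (Finset.card_le_card hsub)).symm
  · push Not at hall
    obtain ⟨i, hiT, hvi⟩ := hall
    have hsT : {i ∈ s | y i ≤ v} ⊆ {i ∈ T | y i ≤ v} := by
      intro j hj
      rw [Finset.mem_filter] at hj ⊢
      by_contra hjT
      have := le_of_minimal_sum hmin hTs hiT hj.1 (fun h ↦ hjT ⟨h, hj.2⟩)
      linarith [hj.2]
    rw [← Finset.Subset.antisymm hsub hsT]
    exact (min_eq_left (Finset.card_filter_le T fun i ↦ y i ≤ v)).symm

lemma setIntegral_Ioi_indicator_Iio_one {c : ℝ} (hc : 0 ≤ c) :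
    ∫ v in Ioi 0, (Iio c).indicator (fun _ ↦ (1 : ℝ)) v = c := by
  rw [setIntegral_indicator measurableSet_Iio, Ioi_inter_Iio, setIntegral_const,
    Real.volume_real_Ioo_of_le hc, sub_zero, smul_eq_mul, mul_one]

lemma sum_eq_setIntegral_Ioi_card_filter_lt (hy : ∀ i ∈ T, 0 ≤ y i) :
    ∑ i ∈ T, y i = ∫ v in Ioi 0, (#{i ∈ T | v < y i} : ℝ) := by
  have hcard (v : ℝ) :
      (#{i ∈ T | v < y i} : ℝ) = ∑ i ∈ T, (Iio (y i)).indicator (fun _ ↦ (1 : ℝ)) v := by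
    simp [Finset.sum_boole, Set.indicator_apply]
  simp_rw [hcard]
  have hintegrable (c : ℝ) :
      Integrable ((Iio c).indicator fun _ ↦ (1 : ℝ)) (volume.restrict (Ioi 0)) := by
    refine IntegrableOn.integrable_indicator (integrableOn_const ?_) measurableSet_Iio
    rw [Measure.restrict_apply measurableSet_Iio, Iio_inter_Ioi]
    exact measure_Ioo_lt_top.ne
  rw [integral_finsetSum _ fun i _ ↦ hintegrable (y i)]
  exact Finset.sum_congr rfl fun i hi ↦ (setIntegral_Ioi_indicator_Iio_one (hy i hi)).symm

theorem sumSmallest_eq_setIntegral_Ioi {m : ℕ} (hy : ∀ i ∈ s, 0 ≤ y i) (hm : m ≤ s.card) :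
    sumSmallest s m y = ∫ v in Ioi 0, max ((m : ℝ) - #{i ∈ s | y i ≤ v}) 0 := by
  classical
  obtain ⟨T, hTs, rfl, hsum, hmin⟩ := exists_sumSmallest_eq y hm
  rw [hsum, sum_eq_setIntegral_Ioi_card_filter_lt fun i hi ↦ hy i (hTs hi)]
  congr 1 with v
  have hsplit := Finset.card_filter_add_card_filter_not (s := T) (fun i ↦ y i ≤ v)
  simp only [not_le, card_filter_le_of_minimal_sum hmin hTs v] at hsplit
  have hcount : (#{i ∈ T | v < y i} : ℤ) = max ((#T : ℤ) - #{i ∈ s | y i ≤ v}) 0 := by omega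
  exact_mod_cast hcount

end SumSmallest

noncomputable def empiricalCdf (y : ℕ → ℝ) (k : ℕ) (v : ℝ) : ℝ :=
  #{i ∈ Finset.range k | y i ≤ v} / k

lemma empiricalCdf_nonneg (y : ℕ → ℝ) (k : ℕ) (v : ℝ) : 0 ≤ empiricalCdf y k v := by
  unfold empiricalCdf; positivity

lemma monotone_empiricalCdf (y : ℕ → ℝ) (k : ℕ) : Monotone (empiricalCdf y k) := fun _ _ h ↦
  div_le_div_of_nonneg_right (by gcongr) (Nat.cast_nonneg k)

lemma sumSmallest_range_div_eq_setIntegral_Ioi {y : ℕ → ℝ} (hy : ∀ i, 0 ≤ y i) {k m : ℕ}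
    (hm : m ≤ k) :
    sumSmallest (Finset.range k) m y / k =
      ∫ v in Ioi 0, max ((m : ℝ) / k - empiricalCdf y k v) 0 := by
  rw [sumSmallest_eq_setIntegral_Ioi (fun i _ ↦ hy i) (by simpa using hm), ← integral_div]
  congr 1 with v
  rw [empiricalCdf, ← sub_div, ← max_div_div_right (Nat.cast_nonneg k), zero_div]

lemma tendsto_of_monotone_of_tendsto_ratCast {ι : Type*} {l : Filter ι} {G : ι → ℝ → ℝ}
    {F : ℝ → ℝ} (hG : ∀ n, Monotone (G n)) (hF : Monotone F)
    (h : ∀ q : ℚ, Tendsto (fun n ↦ G n q) l (𝓝 (F q))) {v : ℝ} (hv : ContinuousAt F v) :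
    Tendsto (fun n ↦ G n v) l (𝓝 (F v)) := by
  refine tendsto_order.2 ⟨fun a ha ↦ ?_, fun b hb ↦ ?_⟩
  · obtain ⟨x, hxa, hxv⟩ :=
      ((hv.eventually (lt_mem_nhds ha)).filter_mono nhdsWithin_le_nhds |>.and
        (self_mem_nhdsWithin (s := Iio v))).exists
    obtain ⟨q, hxq, hqv⟩ := exists_rat_btwn hxv
    filter_upwards [(h q).eventually (lt_mem_nhds (hxa.trans_le (hF hxq.le)))] with n hn
    exact hn.trans_le (hG n hqv.le)
  · obtain ⟨x, hxb, hvx⟩ :=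
      ((hv.eventually (gt_mem_nhds hb)).filter_mono nhdsWithin_le_nhds |>.and
        (self_mem_nhdsWithin (s := Ioi v))).exists
    obtain ⟨q, hvq, hqx⟩ := exists_rat_btwn hvx
    filter_upwards [(h q).eventually (gt_mem_nhds ((hF hqx.le).trans_lt hxb))] with n hn
    exact (hG n hvq.le).trans_lt hn

lemma setIntegral_Ioi_max_sub_eq_Ioc {H : ℝ → ℝ} (hH : Monotone H) {b Q : ℝ} (hbQ : b < H Q) :
    ∫ v in Ioi 0, max (b - H v) 0 = ∫ v in Ioc 0 Q, max (b - H v) 0 :=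
  setIntegral_eq_of_subset_of_forall_sdiff_eq_zero measurableSet_Ioi Ioc_subset_Ioi_self
    fun v hv ↦ max_eq_right (by linarith [hH (not_le.1 fun hvQ ↦ hv.2 ⟨hv.1, hvQ⟩).le])

lemma tendsto_setIntegral_Ioi_max_sub {a : ℕ → ℝ} {G : ℕ → ℝ → ℝ} {F : ℝ → ℝ} {α Q : ℝ}
    (hG : ∀ n, Monotone (G n)) (hG0 : ∀ n v, 0 ≤ G n v) (hF : Monotone F)
    (ha : Tendsto a atTop (𝓝 α)) (hGF : ∀ᵐ v, Tendsto (G · v) atTop (𝓝 (F v)))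
    (hQ : Tendsto (G · Q) atTop (𝓝 (F Q))) (hαQ : α < F Q) :
    Tendsto (fun n ↦ ∫ v in Ioi 0, max (a n - G n v) 0) atTop
      (𝓝 (∫ v in Ioi 0, max (α - F v) 0)) := by
  rw [setIntegral_Ioi_max_sub_eq_Ioc hF hαQ]
  refine (tendsto_integral_filter_of_dominated_convergence (F := fun n v ↦ max (a n - G n v) 0)
    (fun _ ↦ |α| + 1) ?_ ?_ ?_ ?_).congr' ?_
  · exact .of_forall fun n ↦
      ((measurable_const.sub (hG n).measurable).max measurable_const).aestronglyMeasurable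
  · filter_upwards [ha.eventually (gt_mem_nhds (lt_of_le_of_lt (le_abs_self α) (lt_add_one _)))]
      with n hn
    refine .of_forall fun v ↦ ?_
    rw [Real.norm_of_nonneg (le_max_right _ _)]
    exact max_le (by linarith [hG0 n v]) (by positivity)
  · exact integrableOn_const measure_Ioc_lt_top.ne
  · filter_upwards [ae_restrict_of_ae hGF] with v hv
    exact (ha.sub hv).max tendsto_const_nhds
  · filter_upwards [ha.eventually_lt hQ hαQ] with n hn
    exact (setIntegral_Ioi_max_sub_eq_Ioc (hG n) hn).symm

theorem tendsto_sumSmallest_div_of_tendsto_empiricalCdf {y : ℕ → ℝ} (hy : ∀ i, 0 ≤ y i)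
    {F : ℝ → ℝ} (hF : Monotone F) (hF1 : Tendsto F atTop (𝓝 1))
    (h : ∀ q : ℚ, Tendsto (fun k ↦ empiricalCdf y k q) atTop (𝓝 (F q)))
    {α : ℝ} (hα0 : 0 ≤ α) (hα1 : α < 1) :
    Tendsto (fun k : ℕ ↦ sumSmallest (Finset.range k) ⌊α * k⌋₊ y / k) atTop
      (𝓝 (∫ v in Ioi 0, max (α - F v) 0)) := by
  obtain ⟨N, hN⟩ := (hF1.eventually (lt_mem_nhds hα1)).exists_forall_of_atTop
  obtain ⟨Q, hQ⟩ := exists_rat_gt N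
  have hfloor : Tendsto (fun k : ℕ ↦ (⌊α * k⌋₊ : ℝ) / k) atTop (𝓝 α) :=
    (tendsto_nat_floor_mul_div_atTop hα0).comp tendsto_natCast_atTop_atTop
  have hcont : ∀ᵐ v, ContinuousAt F v := by
    rw [ae_iff]
    exact hF.countable_not_continuousAt.measure_zero volume
  have hGF : ∀ᵐ v, Tendsto (fun k ↦ empiricalCdf y k v) atTop (𝓝 (F v)) := by
    filter_upwards [hcont] with v hv
    exact tendsto_of_monotone_of_tendsto_ratCast (monotone_empiricalCdf y) hF h hv
  refine (tendsto_setIntegral_Ioi_max_sub (monotone_empiricalCdf y) (empiricalCdf_nonneg y) hF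
    hfloor hGF (h Q) (hN _ hQ.le)).congr fun k ↦ ?_
  exact (sumSmallest_range_div_eq_setIntegral_Ioi hy
    (Nat.floor_le_of_le (mul_le_of_le_one_left k.cast_nonneg hα1.le))).symm

section IID

variable {Ω : Type*} [MeasurableSpace Ω] {μ : Measure Ω} {Y : ℕ → Ω → ℝ} {ν : Measure ℝ}

theorem strong_law_ae_comp (hmeas : ∀ i, Measurable (Y i)) (hindep : iIndepFun Y μ)
    (hlaw : ∀ i, μ.map (Y i) = ν) {f : ℝ → ℝ} (hf : Measurable f) (hfint : Integrable f ν) :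
    ∀ᵐ ω ∂μ, Tendsto (fun k : ℕ ↦ (∑ i ∈ Finset.range k, f (Y i ω)) / k) atTop
      (𝓝 (∫ x, f x ∂ν)) := by
  have hlaw_comp (i : ℕ) : μ.map (f ∘ Y i) = ν.map f := by
    rw [← Measure.map_map hf (hmeas i), hlaw i]
  have hint : Integrable (f ∘ Y 0) μ := by
    rw [← integrable_map_measure (by rw [hlaw 0]; exact hfint.aestronglyMeasurable)
      (hmeas 0).aemeasurable, hlaw 0]
    exact hfint
  have hmean : μ[f ∘ Y 0] = ∫ x, f x ∂ν := by
    rw [← hlaw 0, integral_map (hmeas 0).aemeasurable hf.aestronglyMeasurable]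
    rfl
  rw [← hmean]
  exact strong_law_ae_real (fun i ↦ f ∘ Y i) hint
    (fun i j hij ↦ (hindep.indepFun hij).comp hf hf)
    fun i ↦ ⟨(hf.comp (hmeas i)).aemeasurable, (hf.comp (hmeas 0)).aemeasurable,
      by rw [hlaw_comp i, hlaw_comp 0]⟩

lemma ae_tendsto_empiricalCdf [IsProbabilityMeasure ν] (hmeas : ∀ i, Measurable (Y i))
    (hindep : iIndepFun Y μ) (hlaw : ∀ i, μ.map (Y i) = ν) (v : ℝ) :
    ∀ᵐ ω ∂μ, Tendsto (fun k ↦ empiricalCdf (Y · ω) k v) atTop (𝓝 (cdf ν v)) := by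
  have h := strong_law_ae_comp hmeas hindep hlaw (f := (Iic v).indicator 1)
    (measurable_one.indicator measurableSet_Iic) ((integrable_const 1).indicator measurableSet_Iic)
  rw [integral_indicator_one measurableSet_Iic, ← cdf_eq_real] at h
  filter_upwards [h] with ω hω
  convert hω using 2 with k
  simp [empiricalCdf, Set.indicator_apply, Finset.sum_boole]

variable [IsProbabilityMeasure ν]

theorem ae_tendsto_sumSmallest_div_of_lt_one (hmeas : ∀ i, Measurable (Y i))
    (hindep : iIndepFun Y μ) (hlaw : ∀ i, μ.map (Y i) = ν) (hY : ∀ i ω, 0 ≤ Y i ω)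
    {α : ℝ} (hα0 : 0 ≤ α) (hα1 : α < 1) :
    ∀ᵐ ω ∂μ, Tendsto (fun k : ℕ ↦ sumSmallest (Finset.range k) ⌊α * k⌋₊ (Y · ω) / k) atTop
      (𝓝 (∫ v in Ioi 0, max (α - cdf ν v) 0)) := by
  filter_upwards [ae_all_iff.2 fun q : ℚ ↦ ae_tendsto_empiricalCdf hmeas hindep hlaw q]
    with ω hω
  exact tendsto_sumSmallest_div_of_tendsto_empiricalCdf (hY · ω) (monotone_cdf ν)
    (tendsto_cdf_atTop ν) hω hα0 hα1

lemma integral_id_eq_setIntegral_Ioi_one_sub_cdf (hν : ∀ᵐ x ∂ν, 0 ≤ x)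
    (hint : Integrable id ν) :
    ∫ x, x ∂ν = ∫ v in Ioi 0, max (1 - cdf ν v) 0 := by
  change ∫ x, id x ∂ν = _
  rw [hint.integral_eq_integral_meas_lt hν]
  congr 1 with v
  rw [max_eq_left (sub_nonneg.2 (cdf_le_one ν v)), cdf_eq_real, ← probReal_compl_eq_one_sub
    measurableSet_Iic, compl_Iic]
  rfl

theorem ae_tendsto_sumSmallest_div (hmeas : ∀ i, Measurable (Y i))
    (hindep : iIndepFun Y μ) (hlaw : ∀ i, μ.map (Y i) = ν) (hY : ∀ i ω, 0 ≤ Y i ω)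
    (hint : Integrable id ν) {α : ℝ} (hα0 : 0 ≤ α) (hα1 : α ≤ 1) :
    ∀ᵐ ω ∂μ, Tendsto (fun k : ℕ ↦ sumSmallest (Finset.range k) ⌊α * k⌋₊ (Y · ω) / k) atTop
      (𝓝 (∫ v in Ioi 0, max (α - cdf ν v) 0)) := by
  rcases hα1.lt_or_eq with hα1 | rfl
  · exact ae_tendsto_sumSmallest_div_of_lt_one hmeas hindep hlaw hY hα0 hα1
  have hν : ∀ᵐ x ∂ν, 0 ≤ x := by
    rw [← hlaw 0]
    exact (ae_map_iff (hmeas 0).aemeasurable measurableSet_Ici).2 (.of_forall (hY 0))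
  rw [← integral_id_eq_setIntegral_Ioi_one_sub_cdf hν hint]
  filter_upwards [strong_law_ae_comp hmeas hindep hlaw measurable_id hint] with ω hω
  refine hω.congr fun k ↦ ?_
  have hsum := sumSmallest_card (Finset.range k) (Y · ω)
  rw [Finset.card_range] at hsum
  rw [one_mul, Nat.floor_natCast, hsum]
  rfl

end IID

instance isProbabilityMeasure_map_sq_gaussianReal :
    IsProbabilityMeasure ((gaussianReal 0 1).map (· ^ 2 : ℝ → ℝ)) :=
  Measure.isProbabilityMeasure_map (by fun_prop)

lemma map_div_sq_gaussianReal {s : ℝ} (hs : s ≠ 0) :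
    (gaussianReal 0 (s ^ 2).toNNReal).map (fun x ↦ (x / s) ^ 2) =
      (gaussianReal 0 1).map (· ^ 2) := by
  have hcomp : (fun x : ℝ ↦ (x / s) ^ 2) = (· ^ 2) ∘ (s⁻¹ * ·) := by
    ext x; simp [div_eq_inv_mul]
  rw [hcomp, ← Measure.map_map (by fun_prop) (by fun_prop), gaussianReal_map_const_mul, mul_zero]
  congr
  ext
  simp [Real.coe_toNNReal _ (sq_nonneg s), hs]

lemma cdf_map_sq_gaussianReal (u : ℝ) :
    cdf ((gaussianReal 0 1).map (· ^ 2)) u = (gaussianReal 0 1 {x : ℝ | x ^ 2 ≤ u}).toReal := by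
  rw [cdf_eq_real, measureReal_def, Measure.map_apply (by fun_prop) measurableSet_Iic]
  rfl

lemma integrable_id_map_sq_gaussianReal :
    Integrable id ((gaussianReal 0 1).map (· ^ 2 : ℝ → ℝ)) :=
  (integrable_map_measure (by fun_prop) (by fun_prop)).2 (memLp_id_gaussianReal 2).integrable_sq

theorem smallest_squares_glivenko_cantelli_general
    {Ω : Type*} [MeasurableSpace Ω] (μ : Measure Ω)
    (s α : ℝ) (hs : 0 < s) (hα0 : 0 < α) (hα1 : α ≤ 1)
    (β : ℕ → Ω → ℝ) (hmeas : ∀ i, Measurable (β i))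
    (hindep : iIndepFun β μ)
    (hdist : ∀ i, Measure.map (β i) μ = gaussianReal 0 (Real.toNNReal (s ^ 2))) :
    ∀ᵐ ω ∂μ, Tendsto
      (fun k : ℕ => (1 / ((k : ℝ) * s ^ 2)) *
        sInf {x : ℝ | ∃ T : Finset ℕ, T ⊆ Finset.range k ∧ T.card = ⌊α * (k : ℝ)⌋₊ ∧
          x = ∑ i ∈ T, (β i ω) ^ 2})
      atTop
      (nhds (∫ u in Set.Ioi (0 : ℝ),
        max (α - ((gaussianReal 0 1) {x : ℝ | x ^ 2 ≤ u}).toReal) 0)) := by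
  have hlaw (i : ℕ) :
      μ.map ((fun x ↦ (x / s) ^ 2) ∘ β i) = (gaussianReal 0 1).map (· ^ 2) := by
    rw [← Measure.map_map (by fun_prop) (hmeas i), hdist i, map_div_sq_gaussianReal hs.ne']
  filter_upwards [ae_tendsto_sumSmallest_div (fun i ↦ by fun_prop)
    (hindep.comp (fun _ x ↦ (x / s) ^ 2) fun _ ↦ by fun_prop) hlaw (fun _ _ ↦ sq_nonneg _)
    integrable_id_map_sq_gaussianReal hα0.le hα1] with ω hω
  simp only [cdf_map_sq_gaussianReal] at hω
  refine hω.congr fun k ↦ ?_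
  have hsq : (fun i ↦ β i ω ^ 2) = fun i ↦ s ^ 2 * (β i ω / s) ^ 2 := by
    ext; field_simp
  change sumSmallest (Finset.range k) _ (fun i ↦ (β i ω / s) ^ 2) / k =
    _ * sumSmallest (Finset.range k) _ fun i ↦ β i ω ^ 2
  rw [hsq, sumSmallest_const_mul _ _ _ (sq_nonneg s)]
  field_simp

theorem smallest_squares_glivenko_cantelli
    {Ω : Type*} [MeasurableSpace Ω] (μ : Measure Ω) [IsProbabilityMeasure μ]
    (s α : ℝ) (hs : 0 < s) (hα0 : 0 < α) (hα1 : α ≤ 1)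
    (β : ℕ → Ω → ℝ) (hmeas : ∀ i, Measurable (β i))
    (hindep : iIndepFun β μ)
    (hdist : ∀ i, Measure.map (β i) μ = gaussianReal 0 (Real.toNNReal (s ^ 2))) :
    ∀ᵐ ω ∂μ, Tendsto
      (fun k : ℕ => (1 / ((k : ℝ) * s ^ 2)) *
        sInf {x : ℝ | ∃ T : Finset ℕ, T ⊆ Finset.range k ∧ T.card = ⌊α * (k : ℝ)⌋₊ ∧
          x = ∑ i ∈ T, (β i ω) ^ 2})
      atTop
      (nhds (∫ u in Set.Ioi (0 : ℝ),
        max (α - ((gaussianReal 0 1) {x : ℝ | x ^ 2 ≤ u}).toReal) 0)) :=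
  smallest_squares_glivenko_cantelli_general μ s α hs hα0 hα1 β hmeas hindep hdist
end
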